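/- arXiv:math/0209041 — 4 statements merged into one kernel-verified Lean document; each statement's English description precedes it below -/
import Mathlib

section
/- Let A be a unital C*-algebra generated by self-adjoint elements a₁,…,aₙ,b₁,…,bₘ. Then χ_top(a₁,…,aₙ : b₁,…,bₘ) ≤ κ(a₁,…,aₙ : b₁,…,bₘ), i.e. the topological free entropy of a₁,…,aₙ in the presence of b₁,…,bₘ is at most the free capacity of a₁,…,aₙ in the presence of b₁,…,bₘ. -/
open scoped ComplexOrder
open Matrix MeasureTheory Filter
open scoped ENNReal NNReal
noncomputable section

/-! ### Self-adjoint matrices as a real Hilbert space with ⟪A,B⟫ = Re Tr(AB) -/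

/-- The space of `k × k` complex matrices. -/
abbrev Mat (k : ℕ) : Type := Matrix (Fin k) (Fin k) ℂ

/-- The operator norm of a `k × k` complex matrix (the norm of the induced operator on `ℓ²`). -/
def opNorm {k : ℕ} (M : Mat k) : ℝ := ‖Matrix.toEuclideanCLM (𝕜 := ℂ) M‖

/-- Self-adjoint `k × k` complex matrices, as a standalone type. -/
@[ext] structure SA (k : ℕ) : Type where
  val : Mat k
  isSA : star val = val

namespace SA
variable {k : ℕ}

lemma val_injective : Function.Injective (SA.val (k := k)) := by
  rintro ⟨a, _⟩ ⟨b, _⟩ h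
  cases h; rfl

instance : Zero (SA k) := ⟨⟨0, star_zero _⟩⟩
instance : Add (SA k) := ⟨fun A B => ⟨A.val + B.val, by rw [star_add, A.isSA, B.isSA]⟩⟩
instance : Neg (SA k) := ⟨fun A => ⟨-A.val, by rw [star_neg, A.isSA]⟩⟩
instance : Sub (SA k) := ⟨fun A B => ⟨A.val - B.val, by rw [star_sub, A.isSA, B.isSA]⟩⟩
instance : SMul ℕ (SA k) := ⟨fun n A => ⟨n • A.val, by rw [star_nsmul, A.isSA]⟩⟩
instance : SMul ℤ (SA k) := ⟨fun n A => ⟨n • A.val, by rw [star_zsmul, A.isSA]⟩⟩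
instance : SMul ℝ (SA k) :=
  ⟨fun r A => ⟨r • A.val, by rw [star_smul, star_trivial, A.isSA]⟩⟩

instance : AddCommGroup (SA k) :=
  val_injective.addCommGroup SA.val rfl (fun _ _ => rfl) (fun _ => rfl) (fun _ _ => rfl)
    (fun _ _ => rfl) (fun _ _ => rfl)

instance : Module ℝ (SA k) :=
  val_injective.module ℝ
    { toFun := SA.val, map_zero' := rfl, map_add' := fun _ _ => rfl } (fun _ _ => rfl)

lemma trace_sq (A : SA k) :
    Matrix.trace (A.val * A.val) = ((∑ i, ∑ j, Complex.normSq (A.val j i) : ℝ) : ℂ) := by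
  have hA : A.valᴴ = A.val := A.isSA
  rw [show A.val * A.val = A.valᴴ * A.val by rw [hA]]
  push_cast
  simp [Matrix.trace, Matrix.diag, Matrix.mul_apply, Matrix.conjTranspose_apply,
    Complex.star_def, ← Complex.normSq_eq_conj_mul_self]

/-- The real inner product ⟪A,B⟫ = Re Tr(AB) on self-adjoint matrices. -/
def core (k : ℕ) : InnerProductSpace.Core ℝ (SA k) where
  inner A B := (Matrix.trace (A.val * B.val)).re
  conj_inner_symm A B := by simp [Matrix.trace_mul_comm A.val B.val]
  re_inner_nonneg A := by
    show (0:ℝ) ≤ (Matrix.trace (A.val * A.val)).re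
    rw [trace_sq]
    simp only [Complex.ofReal_re]
    exact Finset.sum_nonneg fun i _ => Finset.sum_nonneg fun j _ => Complex.normSq_nonneg _
  definite A := by
    intro h
    have h2 : (Matrix.trace (A.val * A.val)).re = 0 := h
    rw [trace_sq] at h2
    simp only [Complex.ofReal_re] at h2
    have hz := (Finset.sum_eq_zero_iff_of_nonneg (fun i _ => Finset.sum_nonneg
      (fun j _ => Complex.normSq_nonneg (A.val j i)))).mp h2
    have : A.val = 0 := by
      ext i j
      have := (Finset.sum_eq_zero_iff_of_nonneg
        (fun l _ => Complex.normSq_nonneg (A.val l j))).mp (hz j (Finset.mem_univ j)) i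
        (Finset.mem_univ i)
      simpa [Complex.normSq_eq_zero] using this
    exact val_injective this
  add_left A B C := by
    show (Matrix.trace ((A.val + B.val) * C.val)).re = _
    simp [add_mul, Matrix.trace_add]
  smul_left A B r := by
    show (Matrix.trace ((r • A.val) * B.val)).re = _
    simp [smul_mul_assoc, Matrix.trace_smul]

instance : NormedAddCommGroup (SA k) := (core k).toNormedAddCommGroup
instance : InnerProductSpace ℝ (SA k) := InnerProductSpace.ofCore (core k).toCore
instance : MeasurableSpace (SA k) := borel _
instance : BorelSpace (SA k) := ⟨rfl⟩
instance : FiniteDimensional ℝ (SA k) :=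
  FiniteDimensional.of_injective
    ({ toFun := SA.val, map_add' := fun _ _ => rfl,
       map_smul' := fun _ _ => rfl } : SA k →ₗ[ℝ] Mat k)
    val_injective





end SA
/-! ### Noncommutative polynomials -/

/-- Noncommutative polynomials with complex coefficients in `N` indeterminates. -/
abbrev NCPoly (N : ℕ) : Type := FreeAlgebra ℂ (Fin N)

/-- Evaluation of a noncommutative polynomial at an `N`-tuple of elements of a
unital complex algebra. -/
def NCPoly.eval {N : ℕ} {B : Type*} [Ring B] [Algebra ℂ B] (P : NCPoly N) (x : Fin N → B) : B :=
  FreeAlgebra.lift ℂ x P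

/-- The ordered product `x (w 0) * x (w 1) * ⋯ * x (w (p-1))` of the word `w`. -/
def wordProd {B : Type*} [Monoid B] {N : ℕ} (x : Fin N → B) {p : ℕ} (w : Fin p → Fin N) : B :=
  (List.ofFn fun i => x (w i)).prod

/-! ### Tracial states -/

section TracialState
variable {A : Type*} [Ring A] [Module ℂ A] [StarRing A]

/-- A tracial state on a unital complex ⋆-algebra: a linear functional `τ` with `τ 1 = 1`,
`τ (x⋆ x) ≥ 0` and `τ (x y) = τ (y x)`. -/
structure IsTracialState (τ : A →ₗ[ℂ] ℂ) : Prop where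
  map_one : τ 1 = 1
  nonneg : ∀ x : A, 0 ≤ τ (star x * x)
  mul_comm : ∀ x y : A, τ (x * y) = τ (y * x)

end TracialState

/-! ### Voiculescu's microstates free entropy and free capacity -/

section FreeEntropy
variable {A : Type*} [Ring A] [Module ℂ A] [StarRing A] {n m : ℕ}

/-- The matricial microstates `Γ_R(a₁,…,aₙ,b₁,…,bₘ; k, l, ε; τ)`: tuples of self-adjoint
`k × k` matrices of operator norm at most `R` such that the normalized trace of every word of
length between `1` and `l` differs by at most `ε` from the corresponding `τ`-moment. -/
def GammaR (R : ℝ) (a : Fin n → A) (b : Fin m → A) (τ : A →ₗ[ℂ] ℂ) (k l : ℕ) (ε : ℝ) :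
    Set ((Fin n → SA k) × (Fin m → SA k)) :=
  {CD | (∀ i, opNorm (CD.1 i).val ≤ R) ∧ (∀ j, opNorm (CD.2 j).val ≤ R) ∧
    ∀ (p : ℕ), 1 ≤ p → p ≤ l → ∀ w : Fin p → Fin (n + m),
      ‖(k : ℂ)⁻¹ *
          Matrix.trace (wordProd (Fin.append (fun i => (CD.1 i).val) fun j => (CD.2 j).val) w)
        - τ (wordProd (Fin.append a b) w)‖ ≤ ε}

/-- The microstates for `a₁,…,aₙ` in the presence of `b₁,…,bₘ`: the projection of
`Γ_R(a₁,…,aₙ,b₁,…,bₘ; k, l, ε; τ)` on the first `n` coordinates. -/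
def GammaRPres (R : ℝ) (a : Fin n → A) (b : Fin m → A) (τ : A →ₗ[ℂ] ℂ) (k l : ℕ) (ε : ℝ) :
    Set (Fin n → SA k) :=
  Prod.fst '' GammaR R a b τ k l ε

/-- Voiculescu's microstates free entropy `χ(a₁,…,aₙ : b₁,…,bₘ; τ)` of `a₁,…,aₙ` in the
presence of `b₁,…,bₘ`, with respect to the tracial state `τ`. -/
def chiPres (a : Fin n → A) (b : Fin m → A) (τ : A →ₗ[ℂ] ℂ) : EReal :=
  ⨆ (R : ℝ) (_ : 0 < R), ⨅ (l : ℕ) (ε : ℝ) (_ : 0 < ε),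
    Filter.atTop.limsup fun k : ℕ =>
      (↑(((k : ℝ) ^ 2)⁻¹) : EReal) * ENNReal.log (volume (GammaRPres R a b τ k l ε))
        + (↑((n : ℝ) / 2 * Real.log k) : EReal)

/-- Voiculescu's microstates free entropy `χ(a₁,…,aₙ; τ)`. -/
def chi (a : Fin n → A) (τ : A →ₗ[ℂ] ℂ) : EReal :=
  chiPres a (fun i : Fin 0 => i.elim0) τ

/-- The free capacity `κ(a₁,…,aₙ : b₁,…,bₘ)` of `a₁,…,aₙ` in the presence of `b₁,…,bₘ`:
the supremum of `χ(a₁,…,aₙ : b₁,…,bₘ; τ)` over all tracial states `τ` of the ambient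
algebra. -/
def kappaPres (a : Fin n → A) (b : Fin m → A) : EReal :=
  ⨆ (τ : A →ₗ[ℂ] ℂ) (_ : IsTracialState τ), chiPres a b τ

/-- The free capacity `κ(a₁,…,aₙ)`. -/
def kappa (a : Fin n → A) : EReal :=
  ⨆ (τ : A →ₗ[ℂ] ℂ) (_ : IsTracialState τ), chi a τ

end FreeEntropy

/-! ### Topological free entropy -/

section TopEntropy
variable {A : Type*} [NormedRing A] [NormedAlgebra ℂ A] [StarRing A] {n m : ℕ}

/-- The norm-microstates `Γ_top(a₁,…,aₙ,b₁,…,bₘ; k, ε, P₁,…,P_r)`: tuples of self-adjoint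
`k × k` matrices on which each of the noncommutative polynomials `P j` has operator norm
`ε`-close to its norm at `(a, b)`. -/
def GammaTop (a : Fin n → A) (b : Fin m → A) (k : ℕ) (ε : ℝ) {r : ℕ}
    (P : Fin r → NCPoly (n + m)) : Set ((Fin n → SA k) × (Fin m → SA k)) :=
  {CD | ∀ j : Fin r,
    |opNorm ((P j).eval (Fin.append (fun i => (CD.1 i).val) fun i => (CD.2 i).val))
      - ‖(P j).eval (Fin.append a b)‖| ≤ ε}

/-- Norm-microstates of `a₁,…,aₙ` in the presence of `b₁,…,bₘ`: the projection of
`Γ_top(a₁,…,aₙ,b₁,…,bₘ; k, ε, P₁,…,P_r)` on the first `n` coordinates. -/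
def GammaTopPres (a : Fin n → A) (b : Fin m → A) (k : ℕ) (ε : ℝ) {r : ℕ}
    (P : Fin r → NCPoly (n + m)) : Set (Fin n → SA k) :=
  Prod.fst '' GammaTop a b k ε P

/-- The topological free entropy `χ_top(a₁,…,aₙ : b₁,…,bₘ)` of `a₁,…,aₙ` in the presence
of `b₁,…,bₘ`. -/
def chiTopPres (a : Fin n → A) (b : Fin m → A) : EReal :=
  ⨅ (ε : ℝ) (_ : 0 < ε) (r : ℕ) (P : Fin r → NCPoly (n + m)),
    Filter.atTop.limsup fun k : ℕ =>
      (↑(((k : ℝ) ^ 2)⁻¹) : EReal) * ENNReal.log (volume (GammaTopPres a b k ε P))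
        + (↑((n : ℝ) / 2 * Real.log k) : EReal)

/-- The topological free entropy `χ_top(a₁,…,aₙ)`. -/
def chiTop (a : Fin n → A) : EReal :=
  chiTopPres a (fun i : Fin 0 => i.elim0)

end TopEntropy
/-! ### Topological free entropy dimension -/

/-- The minimal number of elements of an `ε`-net of `X` for the distance function `d`
(`⊤` if there is no finite `ε`-net). -/
def coveringNumber {α : Type*} (d : α → α → ℝ) (ε : ℝ) (X : Set α) : ℕ∞ :=
  ⨅ (S : Finset α) (_ : ∀ x ∈ X, ∃ s ∈ S, d x s ≤ ε), (S.card : ℕ∞)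

/-- The metric on `n`-tuples of `k × k` matrices given by the maximum of the operator norms
of the differences of the coordinates. -/
def opDist {n k : ℕ} (x y : Fin n → Mat k) : ℝ := ⨆ i, opNorm (x i - y i)

/-- The normalized Hilbert–Schmidt metric
`|(A₁,…,Aₙ)|₂ = k^{-1/2} (Σ_j Tr(A_j²))^{1/2}` on `n`-tuples of `k × k` matrices,
applied to differences. -/
def hsDist {n k : ℕ} (x y : Fin n → Mat k) : ℝ :=
  Real.sqrt ((k : ℝ)⁻¹ * (∑ j, Matrix.trace ((x j - y j) * (x j - y j))).re)

section TopDim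
variable {A : Type*} [NormedRing A] [NormedAlgebra ℂ A] [StarRing A] {n m : ℕ}

/-- The norm-microstates of `a₁,…,aₙ` in the presence of `b₁,…,bₘ`, viewed as a subset of
`(M_k)ⁿ`. -/
def GammaTopPresMat (a : Fin n → A) (b : Fin m → A) (k : ℕ) (ε : ℝ) {r : ℕ}
    (P : Fin r → NCPoly (n + m)) : Set (Fin n → Mat k) :=
  (fun C : Fin n → SA k => fun i => (C i).val) '' GammaTopPres a b k ε P

/-- `D_ε(a₁,…,aₙ : b₁,…,bₘ)`, computed with respect to the family of metrics `d` on tuples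
of matrices. -/
def DepsWith (d : ∀ k : ℕ, (Fin n → Mat k) → (Fin n → Mat k) → ℝ)
    (a : Fin n → A) (b : Fin m → A) (ε : ℝ) : EReal :=
  ⨅ (r : ℕ) (P : Fin r → NCPoly (n + m)),
    Filter.atTop.limsup fun k : ℕ =>
      (↑(((k : ℝ) ^ 2)⁻¹) : EReal) *
        ENNReal.log ((coveringNumber (d k) ε (GammaTopPresMat a b k ε P) : ℕ∞) : ℝ≥0∞)

/-- The topological free entropy dimension computed with respect to the family of metrics
`d` on tuples of matrices: `limsup_{ε→0⁺} D_ε / |log ε|`. -/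
def deltaTopWith (d : ∀ k : ℕ, (Fin n → Mat k) → (Fin n → Mat k) → ℝ)
    (a : Fin n → A) (b : Fin m → A) : EReal :=
  Filter.limsup (fun ε : ℝ => (↑|Real.log ε|⁻¹ : EReal) * DepsWith d a b ε)
    (nhdsWithin 0 (Set.Ioi 0))

/-- The topological free entropy dimension `δ_top(a₁,…,aₙ : b₁,…,bₘ)` (for the operator-norm
metric on tuples of matrices). -/
def deltaTopPres (a : Fin n → A) (b : Fin m → A) : EReal :=
  deltaTopWith (fun _ => opDist) a b

/-- The topological free entropy dimension `δ_top(a₁,…,aₙ)`. -/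
def deltaTop (a : Fin n → A) : EReal :=
  deltaTopPres a (fun i : Fin 0 => i.elim0)

/-! ### Semi-microstates -/

/-- The norm-semi-microstates `Γ_top½(a₁,…,aₙ,b₁,…,bₘ; k, ε, P₁,…,P_r)`: only the one-sided
inequalities `‖P_j(C,D)‖ ≤ ‖P_j(a,b)‖ + ε` are required. -/
def GammaTopHalf (a : Fin n → A) (b : Fin m → A) (k : ℕ) (ε : ℝ) {r : ℕ}
    (P : Fin r → NCPoly (n + m)) : Set ((Fin n → SA k) × (Fin m → SA k)) :=
  {CD | ∀ j : Fin r,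
    opNorm ((P j).eval (Fin.append (fun i => (CD.1 i).val) fun i => (CD.2 i).val))
      ≤ ‖(P j).eval (Fin.append a b)‖ + ε}

/-- Norm-semi-microstates of `a₁,…,aₙ` in the presence of `b₁,…,bₘ`. -/
def GammaTopHalfPres (a : Fin n → A) (b : Fin m → A) (k : ℕ) (ε : ℝ) {r : ℕ}
    (P : Fin r → NCPoly (n + m)) : Set (Fin n → SA k) :=
  Prod.fst '' GammaTopHalf a b k ε P

/-- The topological free entropy `χ_top½(a₁,…,aₙ : b₁,…,bₘ)` defined via
norm-semi-microstates. -/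
def chiTopHalfPres (a : Fin n → A) (b : Fin m → A) : EReal :=
  ⨅ (ε : ℝ) (_ : 0 < ε) (r : ℕ) (P : Fin r → NCPoly (n + m)),
    Filter.atTop.limsup fun k : ℕ =>
      (↑(((k : ℝ) ^ 2)⁻¹) : EReal) * ENNReal.log (volume (GammaTopHalfPres a b k ε P))
        + (↑((n : ℝ) / 2 * Real.log k) : EReal)

end TopDim
/-!
Suppose `κ < c`. Take the moment sequences of norm-microstates, as the tolerance shrinks and test
polynomials are added, and let `φ` be one of their limit points for pointwise convergence. It is
normalised, tracial, positive and bounded by the norm of `A`, and the polynomials in the generators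
are dense in `A`, so `φ` is the moment sequence of a tracial state `τ`. As `χ(τ) ≤ κ < c`, some
neighbourhood of `φ` (finitely many moments close to those of `φ`) yields microstate spaces
`Γ_R(τ; l, e)` of entropy `< c`. The limit points form a compact set, covered by finitely many
such neighbourhoods, and by compactness once more, for small enough `ε` and enough test polynomials
all norm-microstates have their moments in this finite union. So `Γ_top` is covered by finitely many
`Γ_R`'s of entropy `< c`, which gives `χ_top ≤ c`.
-/

open Filter Topology

lemma Fin.range_append {α : Type*} {p q : ℕ} (u : Fin p → α) (v : Fin q → α) :
    Set.range (Fin.append u v) = Set.range u ∪ Set.range v := by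
  ext z
  simp only [Set.mem_range, Set.mem_union]
  constructor
  · rintro ⟨i, rfl⟩
    refine Fin.addCases (fun i => ?_) (fun j => ?_) i
    · exact Or.inl ⟨i, (Fin.append_left u v i).symm⟩
    · exact Or.inr ⟨j, (Fin.append_right u v j).symm⟩
  · rintro (⟨i, rfl⟩ | ⟨j, rfl⟩)
    · exact ⟨Fin.castAdd q i, Fin.append_left u v i⟩
    · exact ⟨Fin.natAdd p j, Fin.append_right u v j⟩

lemma Set.star_range_of_isSelfAdjoint {A ι : Type*} [InvolutiveStar A] {x : ι → A}
    (hx : ∀ i, IsSelfAdjoint (x i)) : star (Set.range x) = Set.range x := by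
  rw [← Set.image_star, ← Set.range_comp]
  exact congrArg Set.range (funext fun i => (hx i).star_eq)

lemma isSelfAdjoint_append {A : Type*} [Star A] {n m : ℕ} {a : Fin n → A} {b : Fin m → A}
    (ha : ∀ i, IsSelfAdjoint (a i)) (hb : ∀ j, IsSelfAdjoint (b j)) (i : Fin (n + m)) :
    IsSelfAdjoint (Fin.append a b i) :=
  Fin.addCases (fun i => (Fin.append_left a b i).symm ▸ ha i)
    (fun j => (Fin.append_right a b j).symm ▸ hb j) i

lemma star_freeMonoidLift {M : Type*} [Monoid M] [StarMul M] {X : Type*} {x : X → M}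
    (hx : ∀ i, IsSelfAdjoint (x i)) (w : FreeMonoid X) :
    star (FreeMonoid.lift x w) = FreeMonoid.lift x w.reverse := by
  induction w using FreeMonoid.inductionOn' with
  | one => exact (star_one M).trans (map_one _).symm
  | of_mul i w ih =>
    rw [map_mul, star_mul, ih, FreeMonoid.reverse_mul, map_mul, FreeMonoid.reverse_of,
      FreeMonoid.lift_eval_of, (hx i).star_eq]

lemma norm_freeMonoidLift_le {R : Type*} [SeminormedRing R] [NormOneClass R] {X : Type*}
    {x : X → R} {ρ : ℝ} (hx : ∀ i, ‖x i‖ ≤ ρ) (w : FreeMonoid X) :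
    ‖FreeMonoid.lift x w‖ ≤ ρ ^ w.length := by
  induction w using FreeMonoid.inductionOn' with
  | one => simp
  | of_mul i w ih =>
    rw [map_mul, FreeMonoid.length_mul, FreeMonoid.length_of, pow_add, pow_one,
      FreeMonoid.lift_eval_of]
    exact (norm_mul_le _ _).trans (mul_le_mul (hx i) ih (norm_nonneg _)
      ((norm_nonneg _).trans (hx i)))

namespace NCPoly

variable {N : ℕ}

lemma eval_one {B : Type*} [Ring B] [Algebra ℂ B] (x : Fin N → B) :
    (1 : NCPoly N).eval x = 1 :=
  map_one _

lemma eval_mul {B : Type*} [Ring B] [Algebra ℂ B] (x : Fin N → B) (Q Q' : NCPoly N) :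
    (Q * Q').eval x = Q.eval x * Q'.eval x :=
  map_mul _ _ _

lemma basisFreeMonoid_apply (w : FreeMonoid (Fin N)) :
    FreeAlgebra.basisFreeMonoid ℂ (Fin N) w = FreeMonoid.lift (FreeAlgebra.ι ℂ) w := by
  simp [FreeAlgebra.basisFreeMonoid, FreeAlgebra.equivMonoidAlgebraFreeMonoid]

lemma eval_basisFreeMonoid {B : Type*} [Ring B] [Algebra ℂ B] (x : Fin N → B)
    (w : FreeMonoid (Fin N)) :
    NCPoly.eval (FreeAlgebra.basisFreeMonoid ℂ (Fin N) w) x = FreeMonoid.lift x w := by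
  have h := DFunLike.congr_fun
    (FreeMonoid.comp_lift (FreeAlgebra.lift ℂ x : NCPoly N →* B) (FreeAlgebra.ι ℂ)) w
  simpa [basisFreeMonoid_apply, NCPoly.eval, Function.comp_def] using h

def ofMoments (φ : FreeMonoid (Fin N) → ℂ) : NCPoly N →ₗ[ℂ] ℂ :=
  (FreeAlgebra.basisFreeMonoid ℂ (Fin N)).constr ℂ φ

lemma ofMoments_basisFreeMonoid (φ : FreeMonoid (Fin N) → ℂ) (w : FreeMonoid (Fin N)) :
    ofMoments φ (FreeAlgebra.basisFreeMonoid ℂ (Fin N) w) = φ w :=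
  Module.Basis.constr_basis _ _ _ _

lemma ofMoments_one (φ : FreeMonoid (Fin N) → ℂ) : ofMoments φ 1 = φ 1 := by
  rw [← ofMoments_basisFreeMonoid φ 1, basisFreeMonoid_apply, MonoidHom.map_one]

lemma continuous_ofMoments_apply (Q : NCPoly N) : Continuous fun φ => ofMoments φ Q := by
  simp only [ofMoments, Module.Basis.constr_apply, Finsupp.sum]
  fun_prop

/-- Unlike `star` on `FreeAlgebra ℂ X`, this conjugates the coefficients, as the star of a
C⋆-algebra does. -/
def formalAdjoint (Q : NCPoly N) : NCPoly N :=
  ((FreeAlgebra.basisFreeMonoid ℂ (Fin N)).repr Q).sum fun w c =>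
    starRingEnd ℂ c • FreeAlgebra.basisFreeMonoid ℂ (Fin N) w.reverse

lemma eval_formalAdjoint {B : Type*} [Ring B] [Algebra ℂ B] [StarRing B] [StarModule ℂ B]
    {x : Fin N → B} (hx : ∀ i, IsSelfAdjoint (x i)) (Q : NCPoly N) :
    (formalAdjoint Q).eval x = star (Q.eval x) := by
  have hlin : ∀ R : NCPoly N, R.eval x = FreeAlgebra.lift ℂ x R := fun _ => rfl
  conv_rhs => rw [← (FreeAlgebra.basisFreeMonoid ℂ (Fin N)).linearCombination_repr Q]
  rw [formalAdjoint, Finsupp.linearCombination_apply, hlin, hlin, map_finsuppSum,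
    map_finsuppSum, Finsupp.sum, Finsupp.sum, star_sum]
  refine Finset.sum_congr rfl fun w _ => ?_
  rw [map_smul, map_smul, ← hlin, ← hlin, eval_basisFreeMonoid, eval_basisFreeMonoid,
    star_smul, star_freeMonoidLift hx]
  rfl

end NCPoly

lemma exists_continuousLinearMap_comp_eq {𝕜 E F : Type*} [RCLike 𝕜] [AddCommGroup E]
    [Module 𝕜 E] [NormedAddCommGroup F] [NormedSpace 𝕜 F] (π : E →ₗ[𝕜] F) (L : E →ₗ[𝕜] 𝕜)
    (hL : ∀ v, ‖L v‖ ≤ ‖π v‖) : ∃ τ : F →L[𝕜] 𝕜, ∀ v, τ (π v) = L v := by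
  have hker : LinearMap.ker π ≤ LinearMap.ker L := fun v hv => by
    simpa [LinearMap.mem_ker.1 hv] using hL v
  let L₀ : LinearMap.range π →ₗ[𝕜] 𝕜 :=
    ((LinearMap.ker π).liftQ L hker).comp π.quotKerEquivRange.symm.toLinearMap
  have hL₀ : ∀ v, L₀ ⟨π v, LinearMap.mem_range_self π v⟩ = L v := fun v => by
    simp [L₀, LinearMap.quotKerEquivRange_symm_apply_image]
  let τ₀ : LinearMap.range π →L[𝕜] 𝕜 := L₀.mkContinuous 1 <| by
    rintro ⟨_, v, rfl⟩
    simpa [hL₀] using hL v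
  obtain ⟨τ, hτ, -⟩ := exists_extension_norm_eq _ τ₀
  exact ⟨τ, fun v => (hτ ⟨π v, LinearMap.mem_range_self π v⟩).trans (hL₀ v)⟩

lemma isTracialState_of_dense {A : Type*} [NormedRing A] [NormedAlgebra ℂ A] [StarRing A]
    [ContinuousStar A] {S : Set A} (hS : Dense S) (τ : A →L[ℂ] ℂ) (h1 : τ 1 = 1)
    (hpos : ∀ y ∈ S, 0 ≤ τ (star y * y)) (hcomm : ∀ y ∈ S, ∀ z ∈ S, τ (y * z) = τ (z * y)) :
    IsTracialState (τ : A →ₗ[ℂ] ℂ) where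
  map_one := h1
  nonneg := hS.induction hpos <|
    isClosed_Ici.preimage (τ.continuous.comp (continuous_star.mul continuous_id))
  mul_comm y z := by
    have h := (τ.continuous.comp (continuous_fst.mul continuous_snd)).ext_on (hS.prod hS)
      (τ.continuous.comp (continuous_snd.mul continuous_fst)) fun p hp => hcomm _ hp.1 _ hp.2
    exact congr_fun h (y, z)

open NCPoly in
/-- The conditions on `φ` which the moments `φ w = τ (x^w)` of a tracial state `τ` satisfy. -/
structure IsTracialMoments {A : Type*} [NormedRing A] [NormedAlgebra ℂ A] {N : ℕ}
    (x : Fin N → A) (φ : FreeMonoid (Fin N) → ℂ) : Prop where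
  map_one : φ 1 = 1
  norm_le : ∀ Q : NCPoly N, ‖ofMoments φ Q‖ ≤ ‖Q.eval x‖
  comm : ∀ Q Q' : NCPoly N, ofMoments φ (Q * Q') = ofMoments φ (Q' * Q)
  nonneg : ∀ Q : NCPoly N, 0 ≤ ofMoments φ (formalAdjoint Q * Q)

open NCPoly in
lemma IsTracialMoments.exists_isTracialState {A : Type*} [NormedRing A] [NormedAlgebra ℂ A]
    [StarRing A] [StarModule ℂ A] [ContinuousStar A] {N : ℕ} {x : Fin N → A}
    {φ : FreeMonoid (Fin N) → ℂ} (hφ : IsTracialMoments x φ) (hx : ∀ i, IsSelfAdjoint (x i))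
    (hdense : DenseRange fun Q : NCPoly N => Q.eval x) :
    ∃ τ : A →ₗ[ℂ] ℂ, IsTracialState τ ∧ ∀ Q : NCPoly N, τ (Q.eval x) = ofMoments φ Q := by
  obtain ⟨τ, hτ⟩ := exists_continuousLinearMap_comp_eq (FreeAlgebra.lift ℂ x).toLinearMap
    (ofMoments φ) hφ.norm_le
  refine ⟨τ, isTracialState_of_dense hdense τ ?_ ?_ ?_, hτ⟩
  · rw [← eval_one x, ← hφ.map_one, ← ofMoments_one φ]
    exact hτ 1
  · rintro _ ⟨Q, rfl⟩
    rw [← eval_formalAdjoint hx, ← eval_mul]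
    exact (hτ _).symm ▸ hφ.nonneg Q
  · rintro _ ⟨Q, rfl⟩ _ ⟨Q', rfl⟩
    rw [← eval_mul, ← eval_mul]
    exact (hτ _).trans ((hφ.comm Q Q').trans (hτ _).symm)

section MatrixMoments
open scoped Matrix.Norms.L2Operator
open NCPoly

lemma opNorm_eq_norm {k : ℕ} (M : Mat k) : opNorm M = ‖M‖ := rfl

lemma Matrix.norm_entry_le_l2_opNorm {m n : Type*} [Fintype m] [Fintype n] [DecidableEq n]
    (M : Matrix m n ℂ) (i : m) (j : n) : ‖M i j‖ ≤ ‖M‖ := by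
  have h := M.l2_opNorm_mulVec (EuclideanSpace.single j 1)
  rw [PiLp.norm_single, norm_one, mul_one] at h
  refine le_trans (le_of_eq ?_) ((PiLp.norm_apply_le _ i).trans h)
  simp

lemma Matrix.norm_trace_le_l2_opNorm {k : ℕ} (M : Mat k) : ‖M.trace‖ ≤ k * ‖M‖ := by
  calc ‖M.trace‖ ≤ ∑ i, ‖M i i‖ := norm_sum_le _ _
    _ ≤ ∑ _i : Fin k, ‖M‖ := Finset.sum_le_sum fun i _ => M.norm_entry_le_l2_opNorm i i
    _ = k * ‖M‖ := by simp

variable {k N : ℕ}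

def matrixMoments (k : ℕ) (x : Fin N → Mat k) : FreeMonoid (Fin N) → ℂ :=
  fun w => (k : ℂ)⁻¹ * (FreeMonoid.lift x w).trace

lemma ofMoments_matrixMoments (x : Fin N → Mat k) (Q : NCPoly N) :
    ofMoments (matrixMoments k x) Q = (k : ℂ)⁻¹ * (Q.eval x).trace := by
  have h : ofMoments (matrixMoments k x) = (k : ℂ)⁻¹ •
      (Matrix.traceLinearMap (Fin k) ℂ ℂ).comp (FreeAlgebra.lift ℂ x).toLinearMap :=
    (FreeAlgebra.basisFreeMonoid ℂ (Fin N)).ext fun w => by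
      simp only [ofMoments_basisFreeMonoid, LinearMap.smul_apply, LinearMap.comp_apply,
        AlgHom.toLinearMap_apply, Matrix.traceLinearMap_apply, smul_eq_mul, matrixMoments]
      rw [← NCPoly.eval, eval_basisFreeMonoid]
  rw [h]
  rfl

lemma matrixMoments_one (hk : k ≠ 0) (x : Fin N → Mat k) : matrixMoments k x 1 = 1 := by
  simp [matrixMoments, Matrix.trace_one, hk]

lemma norm_ofMoments_matrixMoments_le (x : Fin N → Mat k) (Q : NCPoly N) :
    ‖ofMoments (matrixMoments k x) Q‖ ≤ ‖Q.eval x‖ := by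
  rcases eq_or_ne k 0 with rfl | hk
  · simp [ofMoments_matrixMoments]
  rw [ofMoments_matrixMoments, norm_mul, norm_inv, Complex.norm_natCast,
    inv_mul_le_iff₀ (by positivity)]
  exact Matrix.norm_trace_le_l2_opNorm _

lemma ofMoments_matrixMoments_mul_comm (x : Fin N → Mat k) (Q Q' : NCPoly N) :
    ofMoments (matrixMoments k x) (Q * Q') = ofMoments (matrixMoments k x) (Q' * Q) := by
  rw [ofMoments_matrixMoments, ofMoments_matrixMoments, eval_mul, eval_mul,
    Matrix.trace_mul_comm]

lemma ofMoments_matrixMoments_nonneg {x : Fin N → Mat k} (hx : ∀ i, IsSelfAdjoint (x i))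
    (Q : NCPoly N) : 0 ≤ ofMoments (matrixMoments k x) (formalAdjoint Q * Q) := by
  rw [ofMoments_matrixMoments, eval_mul, eval_formalAdjoint hx]
  exact mul_nonneg (by simp) (Matrix.posSemidef_conjTranspose_mul_self _).trace_nonneg

lemma norm_matrixMoments_le (hk : k ≠ 0) {x : Fin N → Mat k} {ρ : ℝ} (hx : ∀ i, ‖x i‖ ≤ ρ)
    (w : FreeMonoid (Fin N)) : ‖matrixMoments k x w‖ ≤ ρ ^ w.length := by
  have : NeZero k := ⟨hk⟩
  rw [← ofMoments_basisFreeMonoid (matrixMoments k x)]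
  refine (norm_ofMoments_matrixMoments_le x _).trans ?_
  rw [eval_basisFreeMonoid]
  exact norm_freeMonoidLift_le hx w

end MatrixMoments

section Microstates
open scoped Matrix.Norms.L2Operator
open NCPoly

variable {A : Type*} [NormedRing A] [NormedAlgebra ℂ A] {n m k : ℕ}

def tupleVal (CD : (Fin n → SA k) × (Fin m → SA k)) : Fin (n + m) → Mat k :=
  Fin.append (fun i => (CD.1 i).val) fun j => (CD.2 j).val

lemma tupleVal_castAdd (CD : (Fin n → SA k) × (Fin m → SA k)) (i : Fin n) :
    tupleVal CD (Fin.castAdd m i) = (CD.1 i).val :=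
  Fin.append_left _ _ i

lemma tupleVal_natAdd (CD : (Fin n → SA k) × (Fin m → SA k)) (j : Fin m) :
    tupleVal CD (Fin.natAdd n j) = (CD.2 j).val :=
  Fin.append_right _ _ j

lemma isSelfAdjoint_tupleVal (CD : (Fin n → SA k) × (Fin m → SA k)) (i : Fin (n + m)) :
    IsSelfAdjoint (tupleVal CD i) := by
  refine Fin.addCases (fun i => ?_) (fun j => ?_) i
  · rw [tupleVal_castAdd]; exact (CD.1 i).isSA
  · rw [tupleVal_natAdd]; exact (CD.2 j).isSA

lemma gammaTop_anti {a : Fin n → A} {b : Fin m → A} {ε ε' : ℝ} {r r' : ℕ}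
    {P : Fin r → NCPoly (n + m)} {P' : Fin r' → NCPoly (n + m)} (hε : ε' ≤ ε)
    (hP : Set.range P ⊆ Set.range P') : GammaTop a b k ε' P' ⊆ GammaTop a b k ε P := by
  intro CD hCD j
  obtain ⟨j', hj'⟩ := hP ⟨j, rfl⟩
  exact hj' ▸ (hCD j').trans hε

lemma norm_eval_le_of_mem_gammaTop {a : Fin n → A} {b : Fin m → A} {ε : ℝ} {r : ℕ}
    {P : Fin r → NCPoly (n + m)} {CD : (Fin n → SA k) × (Fin m → SA k)}
    (hCD : CD ∈ GammaTop a b k ε P) {Q : NCPoly (n + m)} (hQ : Q ∈ Set.range P) :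
    ‖Q.eval (tupleVal CD)‖ ≤ ‖Q.eval (Fin.append a b)‖ + ε := by
  obtain ⟨j, rfl⟩ := hQ
  have h : |opNorm ((P j).eval (tupleVal CD)) - ‖(P j).eval (Fin.append a b)‖| ≤ ε := hCD j
  rw [opNorm_eq_norm] at h
  linarith [(abs_le.1 h).2]

/-- Prepending the coordinates `X₁,…,X_N` forces the norm bounds `‖C_i‖ ≤ ‖a_i‖ + ε` on
microstates. -/
def withCoords {N r : ℕ} (P : Fin r → NCPoly N) : Fin (N + r) → NCPoly N :=
  Fin.append (FreeAlgebra.ι ℂ) P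

lemma norm_tupleVal_le_of_mem_gammaTop {a : Fin n → A} {b : Fin m → A} {ε : ℝ} {r : ℕ}
    {P : Fin r → NCPoly (n + m)} {CD : (Fin n → SA k) × (Fin m → SA k)}
    (hCD : CD ∈ GammaTop a b k ε (withCoords P)) (i : Fin (n + m)) :
    ‖tupleVal CD i‖ ≤ ‖Fin.append a b i‖ + ε := by
  have h := norm_eval_le_of_mem_gammaTop hCD (Q := FreeAlgebra.ι ℂ i)
    (by rw [withCoords, Fin.range_append]; exact Or.inl ⟨i, rfl⟩)
  simpa [NCPoly.eval] using h

def microstateMoments (a : Fin n → A) (b : Fin m → A) (ε : ℝ) {r : ℕ}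
    (P : Fin r → NCPoly (n + m)) : Set (FreeMonoid (Fin (n + m)) → ℂ) :=
  {ψ | ∃ k ≠ 0, ∃ CD ∈ GammaTop a b k ε P, matrixMoments k (tupleVal CD) = ψ}

lemma microstateMoments_anti {a : Fin n → A} {b : Fin m → A} {ε ε' : ℝ} {r r' : ℕ}
    {P : Fin r → NCPoly (n + m)} {P' : Fin r' → NCPoly (n + m)} (hε : ε' ≤ ε)
    (hP : Set.range P ⊆ Set.range P') :
    microstateMoments a b ε' P' ⊆ microstateMoments a b ε P := by
  rintro ψ ⟨k, hk, CD, hCD, rfl⟩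
  exact ⟨k, hk, CD, gammaTop_anti hε hP hCD, rfl⟩

/-- Restricting to `ε ≤ 1` keeps the whole family inside one compact `boundedMoments`. -/
def microstateFamily (a : Fin n → A) (b : Fin m → A)
    (j : Set.Ioc (0 : ℝ) 1 × Σ r, Fin r → NCPoly (n + m)) :
    Set (FreeMonoid (Fin (n + m)) → ℂ) :=
  microstateMoments a b j.1 (withCoords j.2.2)

lemma directed_microstateFamily (a : Fin n → A) (b : Fin m → A) :
    Directed (· ⊇ ·) (microstateFamily a b) := by
  rintro ⟨ε₁, r₁, P₁⟩ ⟨ε₂, r₂, P₂⟩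
  have hε : (0 : ℝ) < min ε₁ ε₂ ∧ min ε₁ ε₂ ≤ 1 :=
    ⟨lt_min ε₁.2.1 ε₂.2.1, (min_le_left _ _).trans ε₁.2.2⟩
  have hrange : Set.range (withCoords (Fin.append P₁ P₂)) =
      Set.range (FreeAlgebra.ι ℂ) ∪ (Set.range P₁ ∪ Set.range P₂) := by
    rw [withCoords, Fin.range_append, Fin.range_append]
  refine ⟨(⟨_, hε⟩, ⟨_, Fin.append P₁ P₂⟩), microstateMoments_anti (min_le_left _ _) ?_,
    microstateMoments_anti (min_le_right _ _) ?_⟩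
  all_goals
    rw [hrange, withCoords, Fin.range_append]
    exact Set.union_subset_union_right _ (by simp)

def boundedMoments (N : ℕ) (ρ : ℝ) : Set (FreeMonoid (Fin N) → ℂ) :=
  Set.univ.pi fun w => Metric.closedBall 0 (ρ ^ w.length)

lemma isCompact_boundedMoments (N : ℕ) (ρ : ℝ) : IsCompact (boundedMoments N ρ) :=
  isCompact_univ_pi fun _ => isCompact_closedBall _ _

lemma microstateFamily_subset_boundedMoments {a : Fin n → A} {b : Fin m → A} {ρ : ℝ}
    (hρ : ∀ i, ‖Fin.append a b i‖ + 1 ≤ ρ) (j : Set.Ioc (0 : ℝ) 1 × Σ r, Fin r → NCPoly (n + m)) :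
    microstateFamily a b j ⊆ boundedMoments (n + m) ρ := by
  rintro ψ ⟨k, hk, CD, hCD, rfl⟩ w -
  rw [mem_closedBall_zero_iff]
  exact norm_matrixMoments_le hk (fun i =>
    (norm_tupleVal_le_of_mem_gammaTop hCD i).trans (by linarith [hρ i, j.1.2.2])) w

def limitMoments (a : Fin n → A) (b : Fin m → A) : Set (FreeMonoid (Fin (n + m)) → ℂ) :=
  ⋂ j, closure (microstateFamily a b j)

lemma isCompact_limitMoments {a : Fin n → A} {b : Fin m → A} {ρ : ℝ}
    (hρ : ∀ i, ‖Fin.append a b i‖ + 1 ≤ ρ) : IsCompact (limitMoments a b) :=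
  (isCompact_boundedMoments _ ρ).of_isClosed_subset (isClosed_iInter fun _ => isClosed_closure)
    ((Set.iInter_subset _ (Classical.arbitrary _)).trans <| closure_minimal
      (microstateFamily_subset_boundedMoments hρ _)
      (isCompact_boundedMoments _ ρ).isClosed)

lemma isTracialMoments_of_mem_limitMoments {a : Fin n → A} {b : Fin m → A}
    {φ : FreeMonoid (Fin (n + m)) → ℂ} (hφ : φ ∈ limitMoments a b) :
    IsTracialMoments (Fin.append a b) φ := by
  have hlim : ∀ j {S : Set _}, IsClosed S → microstateFamily a b j ⊆ S → φ ∈ S :=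
    fun j S hS hj => closure_minimal hj hS (Set.mem_iInter.1 hφ j)
  have j₀ := Classical.arbitrary (Set.Ioc (0 : ℝ) 1 × Σ r, Fin r → NCPoly (n + m))
  refine ⟨?_, fun Q => ?_, fun Q Q' => ?_, fun Q => ?_⟩
  · refine hlim j₀ (isClosed_eq (continuous_apply 1) continuous_const) ?_
    rintro _ ⟨k, hk, CD, -, rfl⟩
    exact matrixMoments_one hk _
  · refine le_of_forall_pos_le_add fun ε hε => ?_
    refine hlim (⟨min ε 1, lt_min hε one_pos, min_le_right _ _⟩, ⟨1, fun _ => Q⟩)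
      (isClosed_le (continuous_ofMoments_apply Q).norm continuous_const) ?_
    rintro _ ⟨k, -, CD, hCD, rfl⟩
    refine (norm_ofMoments_matrixMoments_le _ Q).trans <|
      (norm_eval_le_of_mem_gammaTop hCD ?_).trans (by gcongr; exact min_le_left _ _)
    rw [withCoords, Fin.range_append]
    exact Or.inr ⟨0, rfl⟩
  · refine hlim j₀ (isClosed_eq (continuous_ofMoments_apply _) (continuous_ofMoments_apply _)) ?_
    rintro _ ⟨k, -, CD, -, rfl⟩
    exact ofMoments_matrixMoments_mul_comm _ Q Q'
  · refine hlim j₀ (isClosed_Ici.preimage (continuous_ofMoments_apply _)) ?_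
    rintro _ ⟨k, -, CD, -, rfl⟩
    exact ofMoments_matrixMoments_nonneg (isSelfAdjoint_tupleVal CD) Q

end Microstates

lemma IsCompact.exists_subset_of_iInter_closure_subset {X ι : Type*} [TopologicalSpace X]
    [Nonempty ι] {K U : Set X} {S : ι → Set X} (hK : IsCompact K) (hSK : ∀ i, S i ⊆ K)
    (hS : Directed (· ⊇ ·) S) (hU : IsOpen U) (h : ⋂ i, closure (S i) ⊆ U) :
    ∃ i, S i ⊆ U := by
  obtain ⟨i, hi⟩ := (hK.diff hU).elim_directed_family_closed (fun i => closure (S i))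
    (fun _ => isClosed_closure)
    (Set.eq_empty_of_forall_notMem fun x hx => hx.1.2 (h hx.2))
    (hS.mono_comp (g := closure) _ fun _ _ hst => closure_mono hst)
  exact ⟨i, fun x hx => by_contra fun hxU => hi.subset ⟨⟨hSK i hx, hxU⟩, subset_closure hx⟩⟩

section MomentNeighbourhoods
open scoped Matrix.Norms.L2Operator
variable {N : ℕ}

abbrev wordOf {p : ℕ} (w : Fin p → Fin N) : FreeMonoid (Fin N) := .ofList (List.ofFn w)

lemma wordProd_eq_lift_wordOf {B : Type*} [Monoid B] (x : Fin N → B) {p : ℕ}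
    (w : Fin p → Fin N) : wordProd x w = FreeMonoid.lift x (wordOf w) := by
  rw [FreeMonoid.lift_ofList, List.map_ofFn]
  rfl

def momentNbhd (φ : FreeMonoid (Fin N) → ℂ) (l : ℕ) (e : ℝ) : Set (FreeMonoid (Fin N) → ℂ) :=
  {ψ | ∀ p ≤ l, ∀ w : Fin p → Fin N, ‖ψ (wordOf w) - φ (wordOf w)‖ < e}

lemma isOpen_momentNbhd (φ : FreeMonoid (Fin N) → ℂ) (l : ℕ) (e : ℝ) :
    IsOpen (momentNbhd φ l e) := by
  simp only [momentNbhd, Set.ofPred_forall]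
  exact (Set.finite_Iic l).isOpen_biInter fun p _ => isOpen_iInter_of_finite fun w =>
    isOpen_lt ((continuous_apply _).sub continuous_const).norm continuous_const

lemma mem_momentNbhd_self (φ : FreeMonoid (Fin N) → ℂ) (l : ℕ) {e : ℝ} (he : 0 < e) :
    φ ∈ momentNbhd φ l e := fun p _ w => by simpa using he

variable {A : Type*} [NormedRing A] [NormedAlgebra ℂ A] {n m k : ℕ}

lemma mem_gammaR_of_mem_momentNbhd {a : Fin n → A} {b : Fin m → A} {τ : A →ₗ[ℂ] ℂ}
    {φ : FreeMonoid (Fin (n + m)) → ℂ} {R e : ℝ} {l : ℕ} {CD : (Fin n → SA k) × (Fin m → SA k)}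
    (hR : ∀ i, ‖tupleVal CD i‖ ≤ R) (hτ : ∀ w, τ (FreeMonoid.lift (Fin.append a b) w) = φ w)
    (hCD : matrixMoments k (tupleVal CD) ∈ momentNbhd φ l e) : CD ∈ GammaR R a b τ k l e := by
  refine ⟨fun i => ?_, fun j => ?_, fun p _ hpl w => ?_⟩
  · simpa [tupleVal_castAdd, opNorm_eq_norm] using hR (Fin.castAdd m i)
  · simpa [tupleVal_natAdd, opNorm_eq_norm] using hR (Fin.natAdd n j)
  · rw [wordProd_eq_lift_wordOf, wordProd_eq_lift_wordOf, hτ]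
    exact (hCD p hpl w).le

end MomentNeighbourhoods

section Entropy

def entropyTerm (n : ℕ) (v : ℕ → ℝ≥0∞) (k : ℕ) : EReal :=
  (↑(((k : ℝ) ^ 2)⁻¹) : EReal) * ENNReal.log (v k) + (↑((n : ℝ) / 2 * Real.log k) : EReal)

lemma EReal.coe_mul_add_coe_le_coe_iff {s : ℝ} (hs : 0 < s) (x : EReal) (d c : ℝ) :
    (s : EReal) * x + d ≤ c ↔ x ≤ ((c - d) / s : ℝ) := by
  induction x using EReal.rec with
  | bot => simp [EReal.mul_bot_of_pos (EReal.coe_pos.2 hs)]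
  | top => simp [EReal.mul_top_of_pos (EReal.coe_pos.2 hs)]
  | coe x =>
    norm_cast
    rw [le_div_iff₀ hs]
    constructor <;> intro h <;> linarith

lemma entropyTerm_le_iff {n k : ℕ} (hk : k ≠ 0) (v : ℕ → ℝ≥0∞) (c : ℝ) :
    entropyTerm n v k ≤ c ↔
      v k ≤ ENNReal.ofReal (Real.exp ((c - n / 2 * Real.log k) * (k : ℝ) ^ 2)) := by
  rw [entropyTerm, EReal.coe_mul_add_coe_le_coe_iff (by positivity), ← ENNReal.log_le_log_iff,
    ENNReal.log_ofReal_of_pos (Real.exp_pos _), Real.log_exp, div_inv_eq_mul]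

lemma limsup_entropyTerm_le_of_le_sum {ι : Type*} (t : Finset ι) {n : ℕ} {v : ℕ → ℝ≥0∞}
    {w : ι → ℕ → ℝ≥0∞} {c : ℝ} (hv : ∀ᶠ k in atTop, v k ≤ ∑ i ∈ t, w i k)
    (hw : ∀ i ∈ t, limsup (entropyTerm n (w i)) atTop < c) :
    limsup (entropyTerm n v) atTop ≤ c := by
  set C : ℝ := t.card + 1
  have hbound : ∀ᶠ k : ℕ in atTop,
      entropyTerm n v k ≤ ((((k : ℝ) ^ 2)⁻¹ * Real.log C + c : ℝ) : EReal) := by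
    filter_upwards [hv, eventually_ne_atTop 0,
      (eventually_all_finset t).2 fun i hi => eventually_lt_of_limsup_lt (hw i hi)]
      with k hvk hk hwk
    set E := ENNReal.ofReal (Real.exp ((c - n / 2 * Real.log k) * (k : ℝ) ^ 2))
    rw [entropyTerm_le_iff hk]
    calc v k ≤ ∑ i ∈ t, w i k := hvk
      _ ≤ ∑ _i ∈ t, E := Finset.sum_le_sum fun i hi => (entropyTerm_le_iff hk _ c).1 (hwk i hi).le
      _ ≤ ENNReal.ofReal C * E := by
        rw [Finset.sum_const, nsmul_eq_mul, ENNReal.ofReal_add (by positivity) zero_le_one,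
          ENNReal.ofReal_natCast, ENNReal.ofReal_one]
        gcongr
        exact le_self_add
      _ = _ := by
        rw [← ENNReal.ofReal_mul (by positivity), ← Real.exp_log (by positivity : (0 : ℝ) < C),
          ← Real.exp_add, Real.log_exp]
        congr 2
        field_simp
        ring
  have htend : Tendsto (fun k : ℕ => ((k : ℝ) ^ 2)⁻¹ * Real.log C + c) atTop (𝓝 c) := by
    simpa using ((tendsto_inv_atTop_zero.comp ((tendsto_pow_atTop two_ne_zero).comp
      tendsto_natCast_atTop_atTop)).mul_const (Real.log C)).add_const c
  exact (limsup_le_limsup hbound).trans_eq (EReal.tendsto_coe.2 htend).limsup_eq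

variable {A : Type*} [NormedRing A] [NormedAlgebra ℂ A] {n m : ℕ}

lemma chiTopPres_le_limsup_entropyTerm (a : Fin n → A) (b : Fin m → A) {ε : ℝ} (hε : 0 < ε)
    {r : ℕ} (P : Fin r → NCPoly (n + m)) :
    chiTopPres a b ≤ limsup (entropyTerm n fun k => volume (GammaTopPres a b k ε P)) atTop := by
  rw [chiTopPres]
  exact iInf₂_le_of_le ε hε (iInf₂_le_of_le r P le_rfl)

lemma exists_limsup_entropyTerm_lt_of_chiPres_lt {a : Fin n → A} {b : Fin m → A}
    {τ : A →ₗ[ℂ] ℂ} {R : ℝ} (hR : 0 < R) {c : EReal} (h : chiPres a b τ < c) :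
    ∃ l e, 0 < e ∧
      limsup (entropyTerm n fun k => volume (GammaRPres R a b τ k l e)) atTop < c := by
  have h' := (le_iSup₂ (f := fun R (_ : 0 < R) => ⨅ (l : ℕ) (e : ℝ) (_ : 0 < e),
    limsup (entropyTerm n fun k => volume (GammaRPres R a b τ k l e)) atTop) R hR).trans_lt h
  simpa only [iInf_lt_iff, exists_prop] using h'

end Entropy

section Main
open NCPoly

variable {A : Type*} [NormedRing A] [NormedAlgebra ℂ A] {n m : ℕ}

lemma gammaTopPres_subset_biUnion_gammaRPres {a : Fin n → A} {b : Fin m → A} {k : ℕ}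
    (hk : k ≠ 0) {ε ρ : ℝ} (hε : ε ≤ 1) (hρ : ∀ i, ‖Fin.append a b i‖ + 1 ≤ ρ) {r : ℕ}
    {P : Fin r → NCPoly (n + m)} (t : Finset (FreeMonoid (Fin (n + m)) → ℂ))
    {τ : (FreeMonoid (Fin (n + m)) → ℂ) → A →ₗ[ℂ] ℂ} {l : (FreeMonoid (Fin (n + m)) → ℂ) → ℕ}
    {e : (FreeMonoid (Fin (n + m)) → ℂ) → ℝ}
    (hτ : ∀ φ ∈ t, ∀ w, τ φ (FreeMonoid.lift (Fin.append a b) w) = φ w)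
    (hsub : microstateMoments a b ε (withCoords P) ⊆ ⋃ φ ∈ t, momentNbhd φ (l φ) (e φ)) :
    GammaTopPres a b k ε (withCoords P) ⊆ ⋃ φ ∈ t, GammaRPres ρ a b (τ φ) k (l φ) (e φ) := by
  rintro _ ⟨CD, hCD, rfl⟩
  obtain ⟨φ, hφ, hmem⟩ := Set.mem_iUnion₂.1 (hsub ⟨k, hk, CD, hCD, rfl⟩)
  refine Set.mem_iUnion₂.2 ⟨φ, hφ, CD, ?_, rfl⟩
  exact mem_gammaR_of_mem_momentNbhd
    (fun i => (norm_tupleVal_le_of_mem_gammaTop hCD i).trans (by linarith [hρ i])) (hτ φ hφ) hmem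

variable [StarRing A] [StarModule ℂ A] [ContinuousStar A]

lemma denseRange_eval_append {a : Fin n → A} {b : Fin m → A}
    (ha : ∀ i, IsSelfAdjoint (a i)) (hb : ∀ j, IsSelfAdjoint (b j))
    (hgen : (StarAlgebra.adjoin ℂ (Set.range a ∪ Set.range b)).topologicalClosure = ⊤) :
    DenseRange fun Q : NCPoly (n + m) => Q.eval (Fin.append a b) := by
  have hrange : Set.range (fun Q : NCPoly (n + m) => Q.eval (Fin.append a b)) =
      StarAlgebra.adjoin ℂ (Set.range a ∪ Set.range b) := by
    rw [← StarSubalgebra.coe_toSubalgebra, StarAlgebra.adjoin_toSubalgebra, Set.union_star,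
      Set.star_range_of_isSelfAdjoint ha, Set.star_range_of_isSelfAdjoint hb, Set.union_self,
      ← Fin.range_append, Algebra.adjoin_range_eq_range_freeAlgebra_lift]
    rfl
  rw [DenseRange, dense_iff_closure_eq, hrange, ← StarSubalgebra.topologicalClosure_coe, hgen]
  rfl

lemma exists_entropy_lt_of_mem_limitMoments {a : Fin n → A} {b : Fin m → A}
    (ha : ∀ i, IsSelfAdjoint (a i)) (hb : ∀ j, IsSelfAdjoint (b j))
    (hgen : (StarAlgebra.adjoin ℂ (Set.range a ∪ Set.range b)).topologicalClosure = ⊤)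
    {R : ℝ} (hR : 0 < R) {c : EReal} (hc : kappaPres a b < c) {φ : FreeMonoid (Fin (n + m)) → ℂ}
    (hφ : φ ∈ limitMoments a b) :
    ∃ (τ : A →ₗ[ℂ] ℂ) (l : ℕ) (e : ℝ), 0 < e ∧
      (∀ w, τ (FreeMonoid.lift (Fin.append a b) w) = φ w) ∧
      limsup (entropyTerm n fun k => volume (GammaRPres R a b τ k l e)) atTop < c := by
  obtain ⟨τ, hτ, hτφ⟩ := (isTracialMoments_of_mem_limitMoments hφ).exists_isTracialState
    (isSelfAdjoint_append ha hb) (denseRange_eval_append ha hb hgen)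
  obtain ⟨l, e, he, hlt⟩ := exists_limsup_entropyTerm_lt_of_chiPres_lt hR
    ((le_iSup₂ (f := fun τ (_ : IsTracialState τ) => chiPres a b τ) τ hτ).trans_lt hc)
  refine ⟨τ, l, e, he, fun w => ?_, hlt⟩
  rw [← eval_basisFreeMonoid, hτφ, ofMoments_basisFreeMonoid]

end Main

theorem chiTopPres_le_kappaPres_general {A : Type*} [NormedRing A] [NormedAlgebra ℂ A] [StarRing A]
    [CStarRing A] [StarModule ℂ A] {n m : ℕ}
    (a : Fin n → A) (b : Fin m → A)
    (ha : ∀ i, IsSelfAdjoint (a i)) (hb : ∀ j, IsSelfAdjoint (b j))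
    (hgen : (StarAlgebra.adjoin ℂ (Set.range a ∪ Set.range b)).topologicalClosure = ⊤) :
    chiTopPres a b ≤ kappaPres a b := by
  refine EReal.le_of_forall_lt_iff_le.1 fun c hc => ?_
  set ρ : ℝ := 1 + ∑ i, ‖Fin.append a b i‖
  have hρ : ∀ i, ‖Fin.append a b i‖ + 1 ≤ ρ := fun i => by
    linarith [Finset.single_le_sum (fun j _ => norm_nonneg (Fin.append a b j)) (Finset.mem_univ i)]
  choose! τ l e he hτ hlt using fun φ (hφ : φ ∈ limitMoments a b) =>
    exists_entropy_lt_of_mem_limitMoments ha hb hgen (by positivity : 0 < ρ) hc hφ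
  obtain ⟨t, htK, hcover⟩ := (isCompact_limitMoments hρ).elim_nhds_subcover
    (fun φ => momentNbhd φ (l φ) (e φ))
    fun φ hφ => (isOpen_momentNbhd _ _ _).mem_nhds (mem_momentNbhd_self _ _ (he φ hφ))
  obtain ⟨⟨ε, r, P⟩, hsub⟩ := (isCompact_boundedMoments _ ρ).exists_subset_of_iInter_closure_subset
    (microstateFamily_subset_boundedMoments hρ) (directed_microstateFamily a b)
    (isOpen_biUnion fun φ _ => isOpen_momentNbhd _ _ _) hcover
  refine (chiTopPres_le_limsup_entropyTerm a b ε.2.1 (withCoords P)).trans <|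
    limsup_entropyTerm_le_of_le_sum t ?_ fun φ hφ => hlt φ (htK φ hφ)
  filter_upwards [eventually_ne_atTop 0] with k hk
  exact (measure_mono (gammaTopPres_subset_biUnion_gammaRPres hk ε.2.2 hρ t
    (fun φ hφ => hτ φ (htK φ hφ)) hsub)).trans (measure_biUnion_finset_le _ _)

/-- If the unital C*-algebra `A` is generated by the self-adjoint elements
`a₁,…,aₙ,b₁,…,bₘ`, then the topological free entropy of `a₁,…,aₙ` in the presence of
`b₁,…,bₘ` is at most the corresponding free capacity. -/
theorem chiTopPres_le_kappaPres {A : Type*} [NormedRing A] [NormedAlgebra ℂ A] [StarRing A]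
    [CStarRing A] [CompleteSpace A] [StarModule ℂ A] {n m : ℕ}
    (a : Fin n → A) (b : Fin m → A)
    (ha : ∀ i, IsSelfAdjoint (a i)) (hb : ∀ j, IsSelfAdjoint (b j))
    (hgen : (StarAlgebra.adjoin ℂ (Set.range a ∪ Set.range b)).topologicalClosure = ⊤) :
    chiTopPres a b ≤ kappaPres a b :=
  chiTopPres_le_kappaPres_general a b ha hb hgen
end
end

section
/- Let A be a unital C*-algebra generated by self-adjoint elements a₁,…,aₙ,b₁,…,bₘ. Then the free capacity is subadditive: κ(a₁,…,aₙ,b₁,…,bₘ) ≤ κ(a₁,…,aₙ : b₁,…,bₘ) + κ(b₁,…,bₘ : a₁,…,aₙ) ≤ κ(a₁,…,aₙ) + κ(b₁,…,bₘ), where κ(a₁,…,aₙ) denotes the free capacity of a₁,…,aₙ as generators of the C*-subalgebra C*(a₁,…,aₙ) ⊆ A, and similarly for κ(b₁,…,bₘ). -/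
open scoped ComplexOrder
open Matrix MeasureTheory Filter
open scoped ENNReal NNReal
noncomputable section

/-!
A microstate for the joint tuple `(a, b)` splits into its first `n` and its last `m` matrices,
which are microstates for `a` in the presence of `b` and, after flipping the two blocks of
letters in every word, for `b` in the presence of `a`. So the joint microstate set lies in a
product, its volume is at most the product of the two volumes, and taking logarithms gives
`χ(a, b; τ) ≤ χ(a : b; τ) + χ(b : a; τ)`. Passing this through the `limsup` and the infima in
`EReal`, where `⊥ + ⊤ = ⊥`, needs the entropy terms to be bounded above; this comes from a
Gaussian bound on the volume of the Hilbert–Schmidt ball of radius `R √k`, which contains every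
self-adjoint `k × k` matrix of operator norm at most `R`.

For the second inequality, forgetting the elements in presence only enlarges the microstate
sets, and a tracial state of `A` restricts to a tracial state of the C*-subalgebra generated by
`a` with the same moments of `a`.
-/

open ComplexStarModule in
def realImaginaryPartEquiv (B : Type*) [AddCommGroup B] [Module ℂ B] [StarAddMonoid B]
    [StarModule ℂ B] : B ≃ₗ[ℝ] selfAdjoint B × selfAdjoint B :=
  { (realPart : B →ₗ[ℝ] selfAdjoint B).prod imaginaryPart with
    invFun := fun x => (x.1 : B) + Complex.I • (x.2 : B)
    left_inv := realPart_add_I_smul_imaginaryPart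
    right_inv := fun x => by ext <;> simp }

theorem sum_normSq_apply_le_opNorm_sq {k : ℕ} (M : Mat k) (i : Fin k) :
    ∑ j, Complex.normSq (M j i) ≤ opNorm M ^ 2 := by
  have hcol : ‖Matrix.toEuclideanCLM (𝕜 := ℂ) M (EuclideanSpace.single i 1)‖ ≤ opNorm M := by
    simpa [opNorm] using (Matrix.toEuclideanCLM (𝕜 := ℂ) M).le_opNorm (EuclideanSpace.single i 1)
  have hsq := pow_le_pow_left₀ (norm_nonneg _) hcol 2
  rw [EuclideanSpace.norm_eq, Real.sq_sqrt (by positivity)] at hsq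
  simpa [Matrix.toEuclideanCLM_toLp, Matrix.mulVec_single, Complex.sq_norm] using hsq

namespace SA

variable {k : ℕ}

def toSelfAdjoint : SA k ≃ₗ[ℝ] selfAdjoint (Mat k) where
  toFun X := ⟨X.val, X.isSA⟩
  invFun X := ⟨X.val, X.prop⟩
  map_add' _ _ := rfl
  map_smul' _ _ := rfl

theorem finrank_eq (k : ℕ) : Module.finrank ℝ (SA k) = k ^ 2 := by
  have := (toSelfAdjoint (k := k)).finiteDimensional
  have h := (realImaginaryPartEquiv (Mat k)).finrank_eq
  rw [Module.finrank_prod, ← toSelfAdjoint.finrank_eq, Module.finrank_matrix,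
    Complex.finrank_real_complex, Fintype.card_fin] at h
  linarith

theorem norm_sq_eq_sum_normSq (X : SA k) : ‖X‖ ^ 2 = ∑ i, ∑ j, Complex.normSq (X.val j i) := by
  have h : ‖X‖ ^ 2 = (Matrix.trace (X.val * X.val)).re := by
    rw [@norm_sq_eq_re_inner ℝ]; rfl
  rw [h, trace_sq, Complex.ofReal_re]

theorem norm_le_sqrt_mul_opNorm (X : SA k) : ‖X‖ ≤ √k * opNorm X.val := by
  have h : ‖X‖ ^ 2 ≤ (√k * opNorm X.val) ^ 2 := by
    rw [norm_sq_eq_sum_normSq, mul_pow, Real.sq_sqrt k.cast_nonneg]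
    calc ∑ i, ∑ j, Complex.normSq (X.val j i) ≤ ∑ _i : Fin k, opNorm X.val ^ 2 :=
          Finset.sum_le_sum fun i _ => sum_normSq_apply_le_opNorm_sq X.val i
      _ = k * opNorm X.val ^ 2 := by simp
  exact le_of_sq_le_sq h (by unfold opNorm; positivity)

end SA

theorem InnerProductSpace.volume_closedBall_le_exp_mul_rpow {V : Type*} [NormedAddCommGroup V]
    [InnerProductSpace ℝ V] [FiniteDimensional ℝ V] [MeasurableSpace V] [BorelSpace V]
    {b : ℝ} (hb : 0 < b) (ρ : ℝ) :
    volume (Metric.closedBall (0 : V) ρ) ≤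
      ENNReal.ofReal (Real.exp (b * ρ ^ 2) * (Real.pi / b) ^ (Module.finrank ℝ V / 2 : ℝ)) := by
  set g : V → ℝ := fun v => Real.exp (-b * ‖v‖ ^ 2)
  have hint : ∫ v, g v = (Real.pi / b) ^ (Module.finrank ℝ V / 2 : ℝ) :=
    GaussianFourier.integral_rexp_neg_mul_sq_norm hb
  have hg : Integrable g := .of_integral_ne_zero (by rw [hint]; positivity)
  set c := ENNReal.ofReal (Real.exp (-b * ρ ^ 2))
  have hball : Metric.closedBall (0 : V) ρ ⊆ {v | c ≤ ENNReal.ofReal (g v)} := by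
    intro v hv
    rw [mem_closedBall_zero_iff] at hv
    refine ENNReal.ofReal_le_ofReal (Real.exp_le_exp.2 ?_)
    have : ‖v‖ ^ 2 ≤ ρ ^ 2 := pow_le_pow_left₀ (norm_nonneg v) hv 2
    nlinarith
  have hmarkov := mul_meas_ge_le_lintegral (μ := volume)
    (by fun_prop : Measurable fun v => ENNReal.ofReal (g v)) c
  calc volume (Metric.closedBall (0 : V) ρ)
      = ENNReal.ofReal (Real.exp (b * ρ ^ 2)) * (c * volume (Metric.closedBall (0 : V) ρ)) := by
        rw [← mul_assoc, ← ENNReal.ofReal_mul (Real.exp_pos _).le, ← Real.exp_add]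
        simp
    _ ≤ ENNReal.ofReal (Real.exp (b * ρ ^ 2)) * ∫⁻ v, ENNReal.ofReal (g v) := by
        gcongr
        exact (mul_le_mul_right (measure_mono hball) c).trans hmarkov
    _ = _ := by
        rw [← ofReal_integral_eq_lintegral_ofReal hg (ae_of_all _ fun _ => (Real.exp_pos _).le),
          hint, ← ENNReal.ofReal_mul (Real.exp_pos _).le]

theorem volume_le_mul_of_mapsTo_split {α : Type*} [MeasureSpace α]
    [SigmaFinite (volume : Measure α)] {n m : ℕ} {S : Set (Fin (n + m) → α)}
    {S₁ : Set (Fin n → α)} {S₂ : Set (Fin m → α)}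
    (h : Set.MapsTo (fun C => (fun i => C (Fin.castAdd m i), fun j => C (Fin.natAdd n j))) S
      (S₁ ×ˢ S₂)) :
    volume S ≤ volume S₁ * volume S₂ := by
  let e : (Fin (n + m) → α) ≃ᵐ (Fin n → α) × (Fin m → α) :=
    (MeasurableEquiv.piCongrLeft (fun _ => α) finSumFinEquiv).symm.trans
      (MeasurableEquiv.sumPiEquivProdPi fun _ => α)
  have he : MeasurePreserving e volume volume :=
    (volume_measurePreserving_sumPiEquivProdPi _).comp
      (volume_measurePreserving_piCongrLeft _ finSumFinEquiv).symm
  calc volume S ≤ volume (e ⁻¹' (S₁ ×ˢ S₂)) := measure_mono h.subset_preimage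
    _ = volume S₁ * volume S₂ := by
        rw [he.measure_preimage_equiv, Measure.volume_eq_prod, Measure.prod_prod]

/-- `chiPres a b τ` is, by definition, `⨆ R > 0, ⨅ l, ⨅ ε > 0, limsup_k` of this quantity
evaluated at `GammaRPres R a b τ k l ε`. -/
def normLogVolume {N k : ℕ} (S : Set (Fin N → SA k)) : EReal :=
  (↑(((k : ℝ) ^ 2)⁻¹) : EReal) * ENNReal.log (volume S) + (↑((N : ℝ) / 2 * Real.log k) : EReal)

theorem normLogVolume_mono {N k : ℕ} {S T : Set (Fin N → SA k)} (h : S ⊆ T) :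
    normLogVolume S ≤ normLogVolume T := by
  unfold normLogVolume
  gcongr

theorem normLogVolume_le_add {n m k : ℕ} {S : Set (Fin (n + m) → SA k)}
    {S₁ : Set (Fin n → SA k)} {S₂ : Set (Fin m → SA k)}
    (h : volume S ≤ volume S₁ * volume S₂) :
    normLogVolume S ≤ normLogVolume S₁ + normLogVolume S₂ := by
  have hsplit : (((n + m : ℕ) : ℝ) / 2 * Real.log k : ℝ)
      = (n : ℝ) / 2 * Real.log k + (m : ℝ) / 2 * Real.log k := by push_cast; ring
  calc normLogVolume S
      ≤ (↑(((k : ℝ) ^ 2)⁻¹) : EReal) * (ENNReal.log (volume S₁) + ENNReal.log (volume S₂))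
          + (↑(((n + m : ℕ) : ℝ) / 2 * Real.log k) : EReal) := by
        unfold normLogVolume
        rw [← ENNReal.log_mul_add]
        gcongr
    _ = normLogVolume S₁ + normLogVolume S₂ := by
        rw [EReal.left_distrib_of_nonneg_of_ne_top (EReal.coe_nonneg.2 (by positivity))
          (EReal.coe_ne_top _), hsplit, EReal.coe_add]
        exact add_add_add_comm _ _ _ _

theorem volume_le_of_opNorm_le {N k : ℕ} (hk : 0 < k) {R : ℝ} (hR : 0 < R)
    {S : Set (Fin N → SA k)} (hS : ∀ C ∈ S, ∀ i, opNorm (C i).val ≤ R) :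
    volume S ≤ ENNReal.ofReal
      (Real.exp ((k : ℝ) ^ 2 / 2) * (2 * Real.pi * R ^ 2 / k) ^ ((k : ℝ) ^ 2 / 2)) ^ N := by
  have hsub : S ⊆ Set.univ.pi fun _ => Metric.closedBall (0 : SA k) (√k * R) := by
    intro C hC i _
    rw [mem_closedBall_zero_iff]
    exact (SA.norm_le_sqrt_mul_opNorm (C i)).trans (by gcongr; exact hS C hC i)
  -- `b = k / (2 R²)` makes `b ρ² = k² / 2` for the radius `ρ = √k R`
  have hb : 0 < (k : ℝ) / (2 * R ^ 2) := by positivity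
  have hball :=
    InnerProductSpace.volume_closedBall_le_exp_mul_rpow (V := SA k) hb (√k * R)
  rw [SA.finrank_eq, mul_pow, Real.sq_sqrt k.cast_nonneg] at hball
  calc volume S ≤ volume (Set.univ.pi fun _ : Fin N => Metric.closedBall (0 : SA k) (√k * R)) :=
        measure_mono hsub
    _ = volume (Metric.closedBall (0 : SA k) (√k * R)) ^ N := by simp [volume_pi_pi]
    _ ≤ _ := by
        gcongr
        convert hball using 4
        · field_simp
        · field_simp
        · push_cast; rfl

theorem normLogVolume_le_of_opNorm_le {N k : ℕ} (hk : 0 < k) {R : ℝ} (hR : 0 < R)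
    {S : Set (Fin N → SA k)} (hS : ∀ C ∈ S, ∀ i, opNorm (C i).val ≤ R) :
    normLogVolume S ≤ (((N : ℝ) / 2 * (1 + Real.log (2 * Real.pi * R ^ 2)) : ℝ) : EReal) := by
  set x := Real.exp ((k : ℝ) ^ 2 / 2) * (2 * Real.pi * R ^ 2 / k) ^ ((k : ℝ) ^ 2 / 2)
  have hk' : (0 : ℝ) < k := by exact_mod_cast hk
  have hx : 0 < x := by positivity
  have hlogx :
      Real.log x = (k : ℝ) ^ 2 / 2 * (1 + Real.log (2 * Real.pi * R ^ 2) - Real.log k) := by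
    rw [Real.log_mul (by positivity) (by positivity), Real.log_exp, Real.log_rpow (by positivity),
      Real.log_div (by positivity) hk'.ne']
    ring
  calc normLogVolume S
      ≤ (↑(((k : ℝ) ^ 2)⁻¹) : EReal) * ENNReal.log (ENNReal.ofReal x ^ N)
          + (↑((N : ℝ) / 2 * Real.log k) : EReal) := by
        unfold normLogVolume
        gcongr
        exact volume_le_of_opNorm_le hk hR hS
    _ = (((k : ℝ) ^ 2)⁻¹ * (N * Real.log x) + (N : ℝ) / 2 * Real.log k : ℝ) := by
        rw [ENNReal.log_pow, ENNReal.log_ofReal_of_pos hx]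
        norm_cast
    _ = _ := by
        rw [hlogx, EReal.coe_eq_coe_iff]
        field_simp
        ring

theorem EReal.iInf_pos_le_iInf_pos_add {f g h : ℕ → ℝ → EReal}
    (hf : ∀ {l₁ l₂ ε₁ ε₂}, l₁ ≤ l₂ → ε₂ ≤ ε₁ → f l₂ ε₂ ≤ f l₁ ε₁)
    (hg : ∀ {l₁ l₂ ε₁ ε₂}, l₁ ≤ l₂ → ε₂ ≤ ε₁ → g l₂ ε₂ ≤ g l₁ ε₁)
    (hf_top : ⨅ (l : ℕ) (ε : ℝ) (_ : 0 < ε), f l ε ≠ ⊤)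
    (hg_top : ⨅ (l : ℕ) (ε : ℝ) (_ : 0 < ε), g l ε ≠ ⊤)
    (hfg : ∀ l ε, h l ε ≤ f l ε + g l ε) :
    ⨅ (l : ℕ) (ε : ℝ) (_ : 0 < ε), h l ε ≤
      (⨅ (l : ℕ) (ε : ℝ) (_ : 0 < ε), f l ε) + ⨅ (l : ℕ) (ε : ℝ) (_ : 0 < ε), g l ε := by
  refine EReal.le_add_of_forall_gt (.inr hg_top) (.inl hf_top) fun u hu v hv => ?_
  simp only [iInf_lt_iff, exists_prop] at hu hv
  obtain ⟨l₁, ε₁, hε₁, hu⟩ := hu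
  obtain ⟨l₂, ε₂, hε₂, hv⟩ := hv
  calc ⨅ (l : ℕ) (ε : ℝ) (_ : 0 < ε), h l ε ≤ h (max l₁ l₂) (min ε₁ ε₂) :=
        iInf₂_le_of_le (max l₁ l₂) (min ε₁ ε₂) (iInf_le _ (lt_min hε₁ hε₂))
    _ ≤ f (max l₁ l₂) (min ε₁ ε₂) + g (max l₁ l₂) (min ε₁ ε₂) := hfg _ _
    _ ≤ f l₁ ε₁ + g l₂ ε₂ :=
        add_le_add (hf (le_max_left _ _) (min_le_left _ _))
          (hg (le_max_right _ _) (min_le_right _ _))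
    _ ≤ u + v := add_le_add hu.le hv.le

theorem Fin.append_apply_of_right_empty {α : Type*} {n : ℕ} (u : Fin n → α) (v : Fin 0 → α)
    (i : Fin (n + 0)) : Fin.append u v i = u i :=
  Fin.append_left u v i

theorem Fin.append_finAddFlip_apply {α : Type*} {m n : ℕ} (u : Fin m → α) (v : Fin n → α)
    (i : Fin (n + m)) : Fin.append u v (finAddFlip i) = Fin.append v u i := by
  cases i using Fin.addCases <;> simp

theorem Fin.apply_append_apply {α β : Type*} {m n : ℕ} (f : α → β) (u : Fin m → α)
    (v : Fin n → α) (i : Fin (m + n)) :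
    f (Fin.append u v i) = Fin.append (fun j => f (u j)) (fun j => f (v j)) i := by
  cases i using Fin.addCases <;> simp

section Microstates

variable {A : Type*} [Ring A] [Module ℂ A] {n m : ℕ}

theorem GammaRPres_anti (R : ℝ) (a : Fin n → A) (b : Fin m → A) (τ : A →ₗ[ℂ] ℂ) (k : ℕ)
    {l₁ l₂ : ℕ} {ε₁ ε₂ : ℝ} (hl : l₁ ≤ l₂) (hε : ε₂ ≤ ε₁) :
    GammaRPres R a b τ k l₂ ε₂ ⊆ GammaRPres R a b τ k l₁ ε₁ :=
  Set.image_mono fun _ ⟨h₁, h₂, h₃⟩ =>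
    ⟨h₁, h₂, fun p hp hpl w => (h₃ p hp (hpl.trans hl) w).trans hε⟩

theorem opNorm_le_of_mem_GammaRPres {R : ℝ} {a : Fin n → A} {b : Fin m → A} {τ : A →ₗ[ℂ] ℂ}
    {k l : ℕ} {ε : ℝ} {C : Fin n → SA k} (hC : C ∈ GammaRPres R a b τ k l ε) (i : Fin n) :
    opNorm (C i).val ≤ R := by
  obtain ⟨_, ⟨h, -, -⟩, rfl⟩ := hC
  exact h i

theorem GammaRPres_subset_GammaRPres_elim0 (R : ℝ) (a : Fin n → A) (b : Fin m → A)
    (τ : A →ₗ[ℂ] ℂ) (k l : ℕ) (ε : ℝ) :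
    GammaRPres R a b τ k l ε ⊆ GammaRPres R a (fun i : Fin 0 => i.elim0) τ k l ε := by
  rintro _ ⟨⟨C, D⟩, ⟨hC, -, h⟩, rfl⟩
  refine ⟨(C, fun i : Fin 0 => i.elim0), ⟨hC, fun i => i.elim0, fun p hp hpl w => ?_⟩, rfl⟩
  simpa only [wordProd, Function.comp_apply, Fin.append_left, Fin.append_apply_of_right_empty]
    using h p hp hpl (Fin.castAdd m ∘ w)

theorem mapsTo_split_GammaRPres_append (R : ℝ) (a : Fin n → A) (b : Fin m → A)
    (τ : A →ₗ[ℂ] ℂ) (k l : ℕ) (ε : ℝ) :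
    Set.MapsTo (fun C => (fun i => C (Fin.castAdd m i), fun j => C (Fin.natAdd n j)))
      (GammaRPres R (Fin.append a b) (fun i : Fin 0 => i.elim0) τ k l ε)
      (GammaRPres R a b τ k l ε ×ˢ GammaRPres R b a τ k l ε) := by
  rintro _ ⟨⟨C, D⟩, ⟨hC, -, h⟩, rfl⟩
  have hC' : ∀ p, 1 ≤ p → p ≤ l → ∀ w : Fin p → Fin (n + m),
      ‖(k : ℂ)⁻¹ * Matrix.trace (wordProd (fun i => (C i).val) w)
        - τ (wordProd (Fin.append a b) w)‖ ≤ ε := fun p hp hpl w => by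
    simpa only [wordProd, Fin.append_apply_of_right_empty] using h p hp hpl w
  refine ⟨⟨(fun i => C (Fin.castAdd m i), fun j => C (Fin.natAdd n j)),
      ⟨fun i => hC _, fun j => hC _, fun p hp hpl w => ?_⟩, rfl⟩,
    ⟨(fun j => C (Fin.natAdd n j), fun i => C (Fin.castAdd m i)),
      ⟨fun j => hC _, fun i => hC _, fun p hp hpl w => ?_⟩, rfl⟩⟩
  · simpa only [Fin.append_castAdd_natAdd (f := fun i => (C i).val)] using hC' p hp hpl w
  · have h' := hC' p hp hpl (finAddFlip ∘ w)
    rw [← Fin.append_castAdd_natAdd (f := fun i => (C i).val)] at h'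
    simpa only [wordProd, Function.comp_apply, Fin.append_finAddFlip_apply] using h'

theorem limsup_normLogVolume_GammaRPres_ne_top {R : ℝ} (hR : 0 < R) (a : Fin n → A)
    (b : Fin m → A) (τ : A →ₗ[ℂ] ℂ) (l : ℕ) (ε : ℝ) :
    atTop.limsup (fun k => normLogVolume (GammaRPres R a b τ k l ε)) ≠ ⊤ :=
  ne_top_of_le_ne_top (EReal.coe_ne_top _) <| limsup_le_of_le (by isBoundedDefault) <|
    (eventually_ge_atTop 1).mono fun _ hk =>
      normLogVolume_le_of_opNorm_le hk hR fun _ hC => opNorm_le_of_mem_GammaRPres hC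

theorem chi_append_le (a : Fin n → A) (b : Fin m → A) (τ : A →ₗ[ℂ] ℂ) :
    chi (Fin.append a b) τ ≤ chiPres a b τ + chiPres b a τ := by
  refine iSup₂_le fun R hR => le_trans ?_ (add_le_add (le_iSup₂ R hR) (le_iSup₂ R hR))
  have hne_top : ∀ {N M : ℕ} (x : Fin N → A) (y : Fin M → A),
      ⨅ (l : ℕ) (ε : ℝ) (_ : 0 < ε),
        atTop.limsup (fun k => normLogVolume (GammaRPres R x y τ k l ε)) ≠ ⊤ := fun x y =>
    ne_top_of_le_ne_top (limsup_normLogVolume_GammaRPres_ne_top hR x y τ 0 1)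
      (iInf₂_le_of_le 0 1 (iInf_le _ one_pos))
  refine EReal.iInf_pos_le_iInf_pos_add
    (fun hl hε => limsup_le_limsup (.of_forall fun k =>
      normLogVolume_mono (GammaRPres_anti R a b τ k hl hε)))
    (fun hl hε => limsup_le_limsup (.of_forall fun k =>
      normLogVolume_mono (GammaRPres_anti R b a τ k hl hε)))
    (hne_top a b) (hne_top b a) fun l ε => ?_
  calc atTop.limsup (fun k => normLogVolume
        (GammaRPres R (Fin.append a b) (fun i : Fin 0 => i.elim0) τ k l ε))
      ≤ atTop.limsup ((fun k => normLogVolume (GammaRPres R a b τ k l ε))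
          + fun k => normLogVolume (GammaRPres R b a τ k l ε)) :=
        limsup_le_limsup (.of_forall fun k => normLogVolume_le_add
          (volume_le_mul_of_mapsTo_split (mapsTo_split_GammaRPres_append R a b τ k l ε)))
    _ ≤ _ := EReal.limsup_add_le
        (.inr (limsup_normLogVolume_GammaRPres_ne_top hR b a τ l ε))
        (.inl (limsup_normLogVolume_GammaRPres_ne_top hR a b τ l ε))

theorem chiPres_le_chi (a : Fin n → A) (b : Fin m → A) (τ : A →ₗ[ℂ] ℂ) :
    chiPres a b τ ≤ chi a τ :=
  iSup₂_mono fun R _ => iInf₂_mono fun l ε => iInf_mono fun _ =>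
    limsup_le_limsup (.of_forall fun k =>
      normLogVolume_mono (GammaRPres_subset_GammaRPres_elim0 R a b τ k l ε))

variable [StarRing A]

theorem kappa_append_le (a : Fin n → A) (b : Fin m → A) :
    kappa (Fin.append a b) ≤ kappaPres a b + kappaPres b a :=
  iSup₂_le fun τ hτ => (chi_append_le a b τ).trans <|
    add_le_add (le_iSup₂ (f := fun τ _ => chiPres a b τ) τ hτ)
      (le_iSup₂ (f := fun τ _ => chiPres b a τ) τ hτ)

theorem kappaPres_le_kappa (a : Fin n → A) (b : Fin m → A) : kappaPres a b ≤ kappa a :=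
  iSup₂_mono fun τ _ => chiPres_le_chi a b τ

end Microstates

section Restriction

variable {A B : Type*} [Ring A] [Algebra ℂ A] [StarRing A] [Ring B] [Algebra ℂ B] [StarRing B]
  {n m : ℕ}

theorem IsTracialState.comp {τ : A →ₗ[ℂ] ℂ} (hτ : IsTracialState τ) (φ : B →⋆ₐ[ℂ] A) :
    IsTracialState (τ ∘ₗ φ.toLinearMap) where
  map_one := by simpa using hτ.map_one
  nonneg x := by simpa [map_star] using hτ.nonneg (φ x)
  mul_comm x y := by simpa using hτ.mul_comm (φ x) (φ y)

theorem GammaR_comp (R : ℝ) (φ : B →⋆ₐ[ℂ] A) (x : Fin n → B) (y : Fin m → B)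
    (τ : A →ₗ[ℂ] ℂ) (k l : ℕ) (ε : ℝ) :
    GammaR R (fun i => φ (x i)) (fun j => φ (y j)) τ k l ε =
      GammaR R x y (τ ∘ₗ φ.toLinearMap) k l ε := by
  have hword : ∀ p (w : Fin p → Fin (n + m)),
      wordProd (Fin.append (fun i => φ (x i)) fun j => φ (y j)) w =
        φ (wordProd (Fin.append x y) w) := fun p w => by
    simp only [wordProd, map_list_prod, List.map_ofFn, Function.comp_def,
      Fin.apply_append_apply φ]
  simp only [GammaR, hword]
  rfl

theorem chi_comp (φ : B →⋆ₐ[ℂ] A) (x : Fin n → B) (τ : A →ₗ[ℂ] ℂ) :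
    chi (fun i => φ (x i)) τ = chi x (τ ∘ₗ φ.toLinearMap) := by
  have h0 : (fun i : Fin 0 => i.elim0 : Fin 0 → A) = fun i => φ (i.elim0 : B) :=
    Subsingleton.elim _ _
  simp only [chi, chiPres, GammaRPres, h0, GammaR_comp]

theorem kappa_le_kappa_of_starAlgHom (φ : B →⋆ₐ[ℂ] A) {x : Fin n → B} {y : Fin n → A}
    (h : ∀ i, φ (x i) = y i) : kappa y ≤ kappa x := by
  obtain rfl : y = fun i => φ (x i) := funext fun i => (h i).symm
  exact iSup₂_le fun τ hτ =>
    (chi_comp φ x τ).le.trans (le_iSup₂ (f := fun τ _ => chi x τ) _ (hτ.comp φ))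

end Restriction

theorem kappa_subadditive_general {A : Type*} [NormedRing A] [NormedAlgebra ℂ A] [StarRing A]
    [CStarRing A] [StarModule ℂ A] {n m : ℕ}
    (a : Fin n → A) (b : Fin m → A) :
    kappa (Fin.append a b) ≤ kappaPres a b + kappaPres b a ∧
    kappaPres a b + kappaPres b a ≤
      kappa (fun i => (⟨a i, StarSubalgebra.le_topologicalClosure _
          (StarAlgebra.subset_adjoin ℂ _ (Set.mem_range_self i))⟩ :
          (StarAlgebra.adjoin ℂ (Set.range a)).topologicalClosure))
      + kappa (fun j => (⟨b j, StarSubalgebra.le_topologicalClosure _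
          (StarAlgebra.subset_adjoin ℂ _ (Set.mem_range_self j))⟩ :
          (StarAlgebra.adjoin ℂ (Set.range b)).topologicalClosure)) :=
  ⟨kappa_append_le a b, add_le_add
    ((kappaPres_le_kappa a b).trans (kappa_le_kappa_of_starAlgHom (StarSubalgebra.subtype _)
      fun _ => rfl))
    ((kappaPres_le_kappa b a).trans (kappa_le_kappa_of_starAlgHom (StarSubalgebra.subtype _)
      fun _ => rfl))⟩

/-- Subadditivity of the free capacity:
`κ(a₁,…,aₙ,b₁,…,bₘ) ≤ κ(a₁,…,aₙ : b₁,…,bₘ) + κ(b₁,…,bₘ : a₁,…,aₙ) ≤ κ(a₁,…,aₙ) + κ(b₁,…,bₘ)`,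
where the last two free capacities are computed in the C*-subalgebras generated by
`a₁,…,aₙ` resp. `b₁,…,bₘ`. -/
theorem kappa_subadditive {A : Type*} [NormedRing A] [NormedAlgebra ℂ A] [StarRing A]
    [CStarRing A] [CompleteSpace A] [StarModule ℂ A] {n m : ℕ}
    (a : Fin n → A) (b : Fin m → A)
    (ha : ∀ i, IsSelfAdjoint (a i)) (hb : ∀ j, IsSelfAdjoint (b j))
    (hgen : (StarAlgebra.adjoin ℂ (Set.range a ∪ Set.range b)).topologicalClosure = ⊤) :
    kappa (Fin.append a b) ≤ kappaPres a b + kappaPres b a ∧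
    kappaPres a b + kappaPres b a ≤
      kappa (fun i => (⟨a i, StarSubalgebra.le_topologicalClosure _
          (StarAlgebra.subset_adjoin ℂ _ (Set.mem_range_self i))⟩ :
          (StarAlgebra.adjoin ℂ (Set.range a)).topologicalClosure))
      + kappa (fun j => (⟨b j, StarSubalgebra.le_topologicalClosure _
          (StarAlgebra.subset_adjoin ℂ _ (Set.mem_range_self j))⟩ :
          (StarAlgebra.adjoin ℂ (Set.range b)).topologicalClosure)) :=
  kappa_subadditive_general a b
end
end

section
/- Topological free entropy is upper semicontinuous with respect to convergence in norm-distribution: let a₁^{(p)},…,aₙ^{(p)} be self-adjoint elements of unital C*-algebras A_p (p ∈ ℕ) and a₁,…,aₙ self-adjoint elements of a unital C*-algebra A, and suppose that for every noncommutative polynomial P ∈ ℂ⟨X₁,…,Xₙ⟩ one has lim_{p→∞} ‖P(a₁^{(p)},…,aₙ^{(p)})‖ = ‖P(a₁,…,aₙ)‖. Then limsup_{p→∞} χ_top(a₁^{(p)},…,aₙ^{(p)}) ≤ χ_top(a₁,…,aₙ). -/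
open scoped ComplexOrder
open Matrix MeasureTheory Filter
open scoped ENNReal NNReal
noncomputable section

/-! If the norms `‖P_j(a)‖` and `‖P_j(c)‖` differ by at most `ε/2`, the triangle inequality
makes every `ε/2`-norm-microstate of `a` an `ε`-norm-microstate of `c`. Convergence in
norm-distribution gives this closeness for all large `p`, so each of the quantities whose
infimum is `χ_top(c)` eventually bounds `χ_top(a^{(p)})`. -/

lemma Fin.append_elim0_right {α : Type*} {N : ℕ} (x : Fin N → α) :
    Fin.append x (fun i : Fin 0 => i.elim0) = x :=
  funext fun i => by simp [Fin.append_elim0 (α := α) x]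

section Semicontinuity
variable {A B : Type*} [NormedRing A] [NormedAlgebra ℂ A] [NormedRing B] [NormedAlgebra ℂ B]
  {n m : ℕ}

def volEntropy (n k : ℕ) (S : Set (Fin n → SA k)) : EReal :=
  (↑(((k : ℝ) ^ 2)⁻¹) : EReal) * ENNReal.log (volume S) + (↑((n : ℝ) / 2 * Real.log k) : EReal)

lemma volEntropy_mono {k : ℕ} {S T : Set (Fin n → SA k)} (hST : S ⊆ T) :
    volEntropy n k S ≤ volEntropy n k T := by
  refine add_le_add_left (mul_le_mul_of_nonneg_left ?_ ?_) _
  · exact ENNReal.log_monotone (measure_mono hST)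
  · exact EReal.coe_nonneg.mpr (by positivity)

lemma chiTopPres_eq (a : Fin n → A) (b : Fin m → A) :
    chiTopPres a b = ⨅ (ε : ℝ) (_ : 0 < ε) (r : ℕ) (P : Fin r → NCPoly (n + m)),
      atTop.limsup fun k => volEntropy n k (GammaTopPres a b k ε P) :=
  rfl

lemma GammaTopPres_subset_of_norm_close {a : Fin n → A} {b : Fin m → A} {c : Fin n → B}
    {d : Fin m → B} {k r : ℕ} {P : Fin r → NCPoly (n + m)} {ε δ : ℝ}
    (hclose : ∀ j, |‖(P j).eval (Fin.append a b)‖ - ‖(P j).eval (Fin.append c d)‖| ≤ δ) :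
    GammaTopPres a b k ε P ⊆ GammaTopPres c d k (ε + δ) P := by
  refine Set.image_mono fun CD hCD j => ?_
  exact (abs_sub_le _ _ _).trans (add_le_add (hCD j) (hclose j))

lemma chiTopPres_le_limsup_of_norm_close {a : Fin n → A} {b : Fin m → A} {c : Fin n → B}
    {d : Fin m → B} {r : ℕ} {P : Fin r → NCPoly (n + m)} {ε : ℝ} (hε : 0 < ε)
    (hclose : ∀ j, |‖(P j).eval (Fin.append a b)‖ - ‖(P j).eval (Fin.append c d)‖| ≤ ε / 2) :
    chiTopPres a b ≤ atTop.limsup fun k => volEntropy n k (GammaTopPres c d k ε P) := by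
  rw [chiTopPres_eq]
  refine (iInf₂_le (ε / 2) (half_pos hε)).trans <| (iInf₂_le r P).trans ?_
  refine limsup_le_limsup (Eventually.of_forall fun k => volEntropy_mono ?_)
  simpa only [add_halves] using GammaTopPres_subset_of_norm_close (k := k) (ε := ε / 2) hclose

end Semicontinuity

theorem chiTop_upperSemicontinuous_general {A : ℕ → Type*} [∀ p, NormedRing (A p)]
    [∀ p, NormedAlgebra ℂ (A p)]
    {B : Type*} [NormedRing B] [NormedAlgebra ℂ B] {n : ℕ}
    (a : ∀ p : ℕ, Fin n → A p) (c : Fin n → B)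
    (hconv : ∀ P : NCPoly n,
      Filter.Tendsto (fun p : ℕ => ‖P.eval (a p)‖) Filter.atTop (nhds ‖P.eval c‖)) :
    Filter.atTop.limsup (fun p : ℕ => chiTop (a p)) ≤ chiTop c := by
  rw [chiTop, chiTopPres_eq]
  refine le_iInf₂ fun ε hε => le_iInf₂ fun r P => limsup_le_of_le (by isBoundedDefault) ?_
  have hclose : ∀ᶠ p in atTop, ∀ j, |‖(P j).eval (a p)‖ - ‖(P j).eval c‖| < ε / 2 :=
    eventually_all.2 fun j => Metric.tendsto_nhds.1 (hconv (P j)) _ (half_pos hε)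
  filter_upwards [hclose] with p hp
  exact chiTopPres_le_limsup_of_norm_close hε fun j => by
    simpa only [Fin.append_elim0_right] using (hp j).le

/-- Topological free entropy is upper semicontinuous with respect to
convergence in norm-distribution. -/
theorem chiTop_upperSemicontinuous {A : ℕ → Type*} [∀ p, NormedRing (A p)]
    [∀ p, NormedAlgebra ℂ (A p)] [∀ p, StarRing (A p)] [∀ p, CStarRing (A p)]
    [∀ p, CompleteSpace (A p)] [∀ p, StarModule ℂ (A p)]
    {B : Type*} [NormedRing B] [NormedAlgebra ℂ B] [StarRing B] [CStarRing B]
    [CompleteSpace B] [StarModule ℂ B] {n : ℕ}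
    (a : ∀ p : ℕ, Fin n → A p) (c : Fin n → B)
    (hsa : ∀ p i, IsSelfAdjoint (a p i)) (hc : ∀ i, IsSelfAdjoint (c i))
    (hconv : ∀ P : NCPoly n,
      Filter.Tendsto (fun p : ℕ => ‖P.eval (a p)‖) Filter.atTop (nhds ‖P.eval c‖)) :
    Filter.atTop.limsup (fun p : ℕ => chiTop (a p)) ≤ chiTop c :=
  chiTop_upperSemicontinuous_general a c hconv
end
end

section
/- Let A', A'' be unital C*-algebras and let B ⊆ A'⊕A'' be a unital C*-subalgebra (containing the unit (1,1)), with π' : B → A' and π'' : B → A'' the restrictions of the coordinate projections. If τ is an extreme point of the set TS(B) of tracial states of B, then either τ = σ'∘π' for some tracial state σ' on the C*-algebra π'(B), or τ = σ''∘π'' for some tracial state σ'' on the C*-algebra π''(B). -/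
open scoped ComplexOrder
open Matrix MeasureTheory Filter
open scoped ENNReal NNReal
noncomputable section

/-!
Let `J = ker π''`, a closed ideal of `B` whose annihilator contains `ker π'`. Along the increasing
approximate unit `(e)` of `J` the functionals `x ↦ τ (e x)` converge to a positive functional
`τ_J ≤ τ` vanishing on the annihilator of `J`. It is tracial, because conjugation by a unitary
permutes the approximate unit and the unitaries span `B`. Extremality of `τ` forces
`τ_J = τ_J(1) • τ`: if `τ_J(1) = 0` then `τ` vanishes on `J`, otherwise on `ker π'`, and `τ`
descends to `π''(B)` or to `π'(B)` accordingly.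
-/

open Topology

namespace NonUnitalStarSubalgebra

lemma mul_mem_left_of_forall_mul_mem_right {R A : Type*} [CommSemiring R] [NonUnitalSemiring A]
    [StarRing A] [Module R A] {S : NonUnitalStarSubalgebra R A} (hS : ∀ x ∈ S, ∀ y, x * y ∈ S)
    {x : A} (hx : x ∈ S) (y : A) : y * x ∈ S := by
  simpa using star_mem (hS (star x) (star_mem hx) (star y))

variable {C : Type*} [NonUnitalCStarAlgebra C] [PartialOrder C] (J : NonUnitalStarSubalgebra ℂ C)

/-- The index set of the canonical increasing approximate unit of `J`. -/
abbrev ApproxUnit : Type _ := ↥({e : J | 0 ≤ e} ∩ Metric.ball 0 1)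

instance : Nonempty J.ApproxUnit := ⟨⟨0, le_rfl, by simp⟩⟩

variable [StarOrderedRing C] [IsClosed (J : Set C)]

lemma sqrt_mem {a : C} (ha : 0 ≤ a) (haJ : a ∈ J) : CFC.sqrt a ∈ J := by
  rw [CFC.sqrt_eq_real_sqrt a ha]
  exact cfcₙ_mem (𝕜' := ℂ) Real.sqrt haJ

instance : StarOrderedRing J :=
  StarOrderedRing.of_nonneg_iff' (fun h z => add_le_add_right h z) fun x => by
    refine ⟨fun (hx : (0 : C) ≤ x) => ?_, ?_⟩
    · refine ⟨⟨CFC.sqrt x, J.sqrt_mem hx x.2⟩, Subtype.ext ?_⟩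
      simp [(CFC.sqrt_nonneg (x : C)).isSelfAdjoint.star_eq, CFC.sqrt_mul_sqrt_self (x : C) hx]
    · rintro ⟨s, rfl⟩
      exact star_mul_self_nonneg (s : C)

instance : IsDirectedOrder J.ApproxUnit :=
  ⟨fun a b => by
    obtain ⟨c, hc, hac, hbc⟩ := CStarAlgebra.directedOn_nonneg_ball a.1 a.2 b.1 b.2
    exact ⟨⟨c, hc⟩, hac, hbc⟩⟩

end NonUnitalStarSubalgebra

namespace NonUnitalStarSubalgebra.ApproxUnit

variable {C : Type*} [CStarAlgebra C] [PartialOrder C] [StarOrderedRing C]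
  {J : NonUnitalStarSubalgebra ℂ C} (hJ : ∀ x ∈ J, ∀ y, x * y ∈ J) (u : unitary C)

def conj (e : J.ApproxUnit) : J.ApproxUnit :=
  ⟨⟨u * e * star u, hJ _ (mul_mem_left_of_forall_mul_mem_right hJ (e : J).2 _) _⟩,
    star_right_conjugate_nonneg e.2.1 (u : C), by
    simpa [← Unitary.coe_star, CStarRing.norm_mul_coe_unitary, CStarRing.norm_coe_unitary_mul]
      using e.2.2⟩

lemma conj_conj_star (e : J.ApproxUnit) : conj hJ u (conj hJ (star u) e) = e := by
  ext
  simp [conj, mul_assoc, ← mul_assoc (u : C) (star u : C)]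

lemma monotone_conj : Monotone (conj hJ u) :=
  fun _ _ (h : ((_ : J) : C) ≤ _) => star_right_conjugate_le_conjugate h (u : C)

lemma tendsto_conj : Tendsto (conj hJ u) atTop atTop :=
  tendsto_atTop_atTop_of_monotone (monotone_conj hJ u)
    fun e => ⟨conj hJ (star u) e, (conj_conj_star hJ u e).ge⟩

end NonUnitalStarSubalgebra.ApproxUnit

lemma LinearMap.eq_zero_of_nonneg_of_map_one_eq_zero {C : Type*} [CStarAlgebra C]
    [PartialOrder C] [StarOrderedRing C] {σ : C →ₗ[ℂ] ℂ} (hσ : ∀ x, 0 ≤ x → 0 ≤ σ x)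
    (h1 : σ 1 = 0) : σ = 0 := by
  refine LinearMap.ext_on CStarAlgebra.span_nonneg fun x (hx : 0 ≤ x) => ?_
  have : ‖σ x‖ ≤ ‖σ 1‖ * ‖x‖ := (PositiveLinearMap.mk₀ σ hσ).norm_apply_le_of_nonneg x hx
  simpa [h1] using this

namespace IsTracialState

section Basic

variable {C : Type*} [CStarAlgebra C] [PartialOrder C] [StarOrderedRing C] {τ : C →ₗ[ℂ] ℂ}

lemma of_nonneg (h1 : τ 1 = 1) (hτ : ∀ x, 0 ≤ x → 0 ≤ τ x)
    (htr : ∀ x y, τ (x * y) = τ (y * x)) : IsTracialState τ :=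
  ⟨h1, fun x => hτ _ (star_mul_self_nonneg x), htr⟩

lemma inv_smul_of_nonneg {c : ℝ} (hc : 0 < c) (h1 : τ 1 = c) (hτ : ∀ x, 0 ≤ x → 0 ≤ τ x)
    (htr : ∀ x y, τ (x * y) = τ (y * x)) : IsTracialState (c⁻¹ • τ) := by
  have hc' : (0 : ℂ) ≤ (c⁻¹ : ℝ) := Complex.zero_le_real.2 (inv_nonneg.2 hc.le)
  refine of_nonneg ?_ (fun x hx => ?_) fun x y => ?_
  · simp [h1, hc.ne']
  · simpa using mul_nonneg hc' (hτ x hx)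
  · simp [htr x y]

lemma map_nonneg (hτ : IsTracialState τ) {a : C} (ha : 0 ≤ a) : 0 ≤ τ a := by
  obtain ⟨s, rfl⟩ := CStarAlgebra.nonneg_iff_eq_star_mul_self.mp ha
  exact hτ.nonneg s

lemma map_mul_nonneg (hτ : IsTracialState τ) {a b : C} (ha : 0 ≤ a) (hb : 0 ≤ b) :
    0 ≤ τ (a * b) := by
  obtain ⟨s, rfl⟩ := CStarAlgebra.nonneg_iff_eq_star_mul_self.mp hb
  rw [← mul_assoc, hτ.mul_comm, ← mul_assoc]
  exact hτ.map_nonneg (star_right_conjugate_nonneg ha s)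

lemma map_mul_le_map_mul (hτ : IsTracialState τ) {a b x : C} (hab : a ≤ b) (hx : 0 ≤ x) :
    τ (a * x) ≤ τ (b * x) := by
  simpa [sub_mul] using hτ.map_mul_nonneg (sub_nonneg.2 hab) hx

lemma eq_map_one_smul_of_mem_extremePoints
    (hτ : τ ∈ Set.extremePoints ℝ {σ : C →ₗ[ℂ] ℂ | IsTracialState σ}) {φ : C →ₗ[ℂ] ℂ}
    (hφ : ∀ x, 0 ≤ x → 0 ≤ φ x) (hφτ : ∀ x, 0 ≤ x → φ x ≤ τ x)
    (htr : ∀ x y, φ (x * y) = φ (y * x)) : φ = φ 1 • τ := by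
  obtain ⟨hτ : IsTracialState τ, hext⟩ := hτ
  have hψ : ∀ x, 0 ≤ x → 0 ≤ (τ - φ) x := fun x hx => sub_nonneg.2 (hφτ x hx)
  set r := (φ 1).re
  have hr : φ 1 = r := Complex.eq_re_of_ofReal_le (r := 0) (by simpa using hφ 1 zero_le_one)
  have hr0 : 0 ≤ r := by simpa [hr] using hφ 1 zero_le_one
  have hr1 : r ≤ 1 := by
    have := hψ 1 zero_le_one
    simp only [LinearMap.sub_apply, hτ.map_one, hr, sub_nonneg] at this
    exact_mod_cast this
  rcases hr0.eq_or_lt with hr0 | hr0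
  · rw [LinearMap.eq_zero_of_nonneg_of_map_one_eq_zero hφ (by simp [hr, ← hr0])]
    simp
  rcases hr1.eq_or_lt with hr1 | hr1
  · have := LinearMap.eq_zero_of_nonneg_of_map_one_eq_zero hψ (by simp [hτ.map_one, hr, hr1])
    rw [sub_eq_zero] at this
    simp [← this, hτ.map_one]
  have h₁ := inv_smul_of_nonneg hr0 hr hφ htr
  have h₂ := inv_smul_of_nonneg (sub_pos.2 hr1) (by simp [hτ.map_one, hr]) hψ
    (by simp [htr, hτ.mul_comm])
  have hseg : τ ∈ openSegment ℝ (r⁻¹ • φ) ((1 - r)⁻¹ • (τ - φ)) := by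
    refine ⟨r, 1 - r, hr0, sub_pos.2 hr1, by ring, ?_⟩
    rw [smul_smul, smul_smul, mul_inv_cancel₀ hr0.ne', mul_inv_cancel₀ (sub_pos.2 hr1).ne',
      one_smul, one_smul, add_sub_cancel]
  rw [hr, ← hext h₁ h₂ hseg]
  ext x
  simp [hr0.ne']

end Basic

section Ideal

open NonUnitalStarSubalgebra

variable {C : Type*} [CStarAlgebra C] [PartialOrder C] [StarOrderedRing C] {τ : C →ₗ[ℂ] ℂ}
  (J : NonUnitalStarSubalgebra ℂ C)

lemma monotone_map_mul (hτ : IsTracialState τ) {x : C} (hx : 0 ≤ x) :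
    Monotone fun e : J.ApproxUnit => τ (e * x) :=
  fun _ _ h => hτ.map_mul_le_map_mul h hx

lemma map_mul_le (hτ : IsTracialState τ) (e : J.ApproxUnit) {x : C} (hx : 0 ≤ x) :
    τ (e * x) ≤ τ x := by
  have he : ((e : J) : C) ≤ 1 :=
    (CStarAlgebra.norm_le_one_iff_of_nonneg _ e.2.1).1 (mem_ball_zero_iff.1 e.2.2).le
  simpa using hτ.map_mul_le_map_mul he hx

lemma exists_tendsto_map_mul_of_nonneg (hτ : IsTracialState τ) {x : C} (hx : 0 ≤ x) :
    ∃ L, Tendsto (fun e : J.ApproxUnit => τ (e * x)) atTop (𝓝 L) := by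
  have hre : Monotone fun e : J.ApproxUnit => (τ (e * x)).re :=
    fun _ _ h => (Complex.le_def.1 (hτ.monotone_map_mul J hx h)).1
  have hbdd : BddAbove (Set.range fun e : J.ApproxUnit => (τ (e * x)).re) :=
    ⟨(τ x).re, Set.forall_mem_range.2 fun e => (Complex.le_def.1 (hτ.map_mul_le J e hx)).1⟩
  refine ⟨_, (Complex.continuous_ofReal.tendsto _).comp (tendsto_atTop_ciSup hre hbdd)
    |>.congr fun e => ?_⟩
  exact (Complex.eq_re_of_ofReal_le (r := 0) (by simpa using hτ.map_mul_nonneg e.2.1 hx)).symm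

variable [IsClosed (J : Set C)]

lemma exists_tendsto_map_mul (hτ : IsTracialState τ) :
    ∃ φ : C →ₗ[ℂ] ℂ, ∀ x, Tendsto (fun e : J.ApproxUnit => τ (e * x)) atTop (𝓝 (φ x)) := by
  have hL : ∀ x, ∃ L, Tendsto (fun e : J.ApproxUnit => τ (e * x)) atTop (𝓝 L) := by
    intro x
    induction (CStarAlgebra.span_nonneg (A := C)).symm ▸ Submodule.mem_top (x := x)
      using Submodule.span_induction with
    | mem x hx => exact hτ.exists_tendsto_map_mul_of_nonneg J hx
    | zero => exact ⟨0, by simp⟩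
    | add x y _ _ hx hy =>
      obtain ⟨L, hL⟩ := hx
      obtain ⟨M, hM⟩ := hy
      exact ⟨L + M, by simpa [mul_add] using hL.add hM⟩
    | smul c x _ hx =>
      obtain ⟨L, hL⟩ := hx
      exact ⟨c * L, by simpa using hL.const_mul c⟩
  choose L hL using hL
  exact ⟨linearMapOfTendsto L (fun e : J.ApproxUnit => τ ∘ₗ LinearMap.mulLeft ℂ (e : C))
    (tendsto_pi_nhds.2 hL), hL⟩

variable (hτ : IsTracialState τ)

/-- `τ_J x = lim τ (e * x)` along the approximate unit of `J`; in the bidual this is `τ (p x)`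
for the central support projection `p` of `J`. -/
def idealPart : C →ₗ[ℂ] ℂ := (hτ.exists_tendsto_map_mul J).choose

lemma tendsto_idealPart (x : C) :
    Tendsto (fun e : J.ApproxUnit => τ (e * x)) atTop (𝓝 (hτ.idealPart J x)) :=
  (hτ.exists_tendsto_map_mul J).choose_spec x

lemma map_mul_le_idealPart (e : J.ApproxUnit) {x : C} (hx : 0 ≤ x) :
    τ (e * x) ≤ hτ.idealPart J x :=
  (hτ.monotone_map_mul J hx).ge_of_tendsto (hτ.tendsto_idealPart J x) e

lemma idealPart_nonneg {x : C} (hx : 0 ≤ x) : 0 ≤ hτ.idealPart J x :=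
  ge_of_tendsto' (hτ.tendsto_idealPart J x) fun e => hτ.map_mul_nonneg e.2.1 hx

lemma idealPart_le {x : C} (hx : 0 ≤ x) : hτ.idealPart J x ≤ τ x :=
  le_of_tendsto' (hτ.tendsto_idealPart J x) fun e => hτ.map_mul_le J e hx

lemma idealPart_eq_zero_of_forall_mul_eq_zero {x : C} (hx : ∀ e ∈ J, e * x = 0) :
    hτ.idealPart J x = 0 :=
  tendsto_nhds_unique (hτ.tendsto_idealPart J x) (by simp [hx _ (Subtype.prop _)])

/-- Since `τ (e * (x * u)) = τ ((u * e * star u) * (u * x))` and conjugation by `u` permutes the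
approximate unit, `τ_J (x * u) = τ_J (u * x)` for unitary `u`; the unitaries span `C`. -/
lemma idealPart_mul_comm (hJ : ∀ x ∈ J, ∀ y, x * y ∈ J) (x y : C) :
    hτ.idealPart J (x * y) = hτ.idealPart J (y * x) := by
  have hunit : ∀ u ∈ unitary C, hτ.idealPart J (x * u) = hτ.idealPart J (u * x) := by
    intro u hu
    refine tendsto_nhds_unique (hτ.tendsto_idealPart J (x * u)) ?_
    refine ((hτ.tendsto_idealPart J (u * x)).comp (ApproxUnit.tendsto_conj hJ ⟨u, hu⟩)).congr
      fun e => ?_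
    calc τ (u * e * star u * (u * x)) = τ (u * (e * x)) := by
          simp [mul_assoc, ← mul_assoc (star u) u, Unitary.star_mul_self_of_mem hu]
      _ = τ (e * (x * u)) := by rw [hτ.mul_comm, mul_assoc]
  exact LinearMap.congr_fun (LinearMap.ext_on (f := hτ.idealPart J ∘ₗ LinearMap.mulLeft ℂ x)
    (g := hτ.idealPart J ∘ₗ LinearMap.mulRight ℂ x) (CStarAlgebra.span_unitary C) hunit) y

lemma map_eq_zero_of_idealPart_eq_zero (h : hτ.idealPart J = 0) {x : C} (hx : x ∈ J) :
    τ x = 0 := by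
  have hsq : ∀ a ∈ J, 0 ≤ a → τ (a * a) = 0 := by
    intro a ha ha₀
    have hc : 0 < ‖a‖ + 1 := by positivity
    let e : J.ApproxUnit :=
      ⟨⟨(‖a‖ + 1)⁻¹ • a, by rw [← Complex.coe_smul]; exact SMulMemClass.smul_mem _ ha⟩,
        smul_nonneg (by positivity) ha₀, by simp [norm_smul, abs_of_pos hc, inv_mul_lt_iff₀ hc]⟩
    have h₁ : (‖a‖ + 1)⁻¹ • τ (a * a) ≤ 0 := by
      simpa [e, h, smul_mul_assoc] using hτ.map_mul_le_idealPart J e ha₀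
    exact le_antisymm ((smul_nonpos_iff_nonpos_of_pos_left (inv_pos.2 hc)).1 h₁)
      (hτ.map_mul_nonneg ha₀ ha₀)
  have hnonneg : ∀ a ∈ J, 0 ≤ a → τ a = 0 := fun a ha ha₀ => by
    rw [← CFC.sqrt_mul_sqrt_self a ha₀]
    exact hsq _ (J.sqrt_mem ha₀ ha) (CFC.sqrt_nonneg a)
  lift x to J using hx
  induction (CStarAlgebra.span_nonneg (A := J)).symm ▸ Submodule.mem_top (x := x)
    using Submodule.span_induction with
  | mem x hx => exact hnonneg x x.2 hx
  | zero => simp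
  | add x y _ _ hx hy => simp [hx, hy]
  | smul c x _ hx => simp [hx]

end Ideal

theorem eq_zero_on_ideal_or_annihilator {C : Type*} [CStarAlgebra C] [PartialOrder C]
    [StarOrderedRing C] {τ : C →ₗ[ℂ] ℂ}
    (hτ : τ ∈ Set.extremePoints ℝ {σ : C →ₗ[ℂ] ℂ | IsTracialState σ})
    (J : NonUnitalStarSubalgebra ℂ C) [IsClosed (J : Set C)] (hJ : ∀ x ∈ J, ∀ y, x * y ∈ J) :
    (∀ x ∈ J, τ x = 0) ∨ ∀ x, (∀ e ∈ J, e * x = 0) → τ x = 0 := by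
  have hτ' : IsTracialState τ := hτ.1
  have hφ := eq_map_one_smul_of_mem_extremePoints hτ (fun _ => hτ'.idealPart_nonneg J)
    (fun _ => hτ'.idealPart_le J) (hτ'.idealPart_mul_comm J hJ)
  by_cases h1 : hτ'.idealPart J 1 = 0
  · left
    exact fun x hx => hτ'.map_eq_zero_of_idealPart_eq_zero J (by rw [hφ, h1, zero_smul]) hx
  · right
    intro x hx
    have := hτ'.idealPart_eq_zero_of_forall_mul_eq_zero J hx
    rw [hφ, LinearMap.smul_apply, smul_eq_mul] at this
    exact (mul_eq_zero.1 this).resolve_left h1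

section Factor

variable {R S : Type*} [Ring R] [Algebra ℂ R] [StarRing R] [Ring S] [Algebra ℂ S] [StarRing S]

lemma of_comp_surjective {τ : R →ₗ[ℂ] ℂ} (hτ : IsTracialState τ) {p : R →⋆ₐ[ℂ] S}
    (hp : Function.Surjective p) {σ : S →ₗ[ℂ] ℂ} (hστ : ∀ x, τ x = σ (p x)) :
    IsTracialState σ where
  map_one := by rw [← _root_.map_one p, ← hστ, hτ.map_one]
  nonneg y := by
    obtain ⟨x, rfl⟩ := hp y
    rw [← map_star, ← map_mul, ← hστ]
    exact hτ.nonneg x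
  mul_comm y z := by
    obtain ⟨x, rfl⟩ := hp y
    obtain ⟨w, rfl⟩ := hp z
    rw [← map_mul, ← map_mul, ← hστ, ← hστ, hτ.mul_comm]

lemma exists_factor_through_map [StarModule ℂ R] [StarModule ℂ S] {B : StarSubalgebra ℂ R}
    {τ : B →ₗ[ℂ] ℂ} (hτ : IsTracialState τ) (F : R →⋆ₐ[ℂ] S)
    (hker : ∀ x : B, F x = 0 → τ x = 0) :
    ∃ σ : B.map F →ₗ[ℂ] ℂ, IsTracialState σ ∧ ∀ x : B, τ x = σ ⟨F x, x, x.2, rfl⟩ := by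
  let p := (F.comp B.subtype).codRestrict (B.map F) fun x => ⟨x, x.2, rfl⟩
  have hp : Function.Surjective p := by
    rintro ⟨_, x, hx, rfl⟩
    exact ⟨⟨x, hx⟩, rfl⟩
  obtain ⟨g, hg⟩ := (p : B →ₗ[ℂ] B.map F).exists_rightInverse_of_surjective
    (LinearMap.range_eq_top.2 hp)
  have hστ : ∀ x, τ x = τ (g (p x)) := fun x => by
    rw [← sub_eq_zero, ← map_sub]
    refine hker _ (congrArg Subtype.val (?_ : p (x - g (p x)) = 0))
    rw [map_sub, sub_eq_zero]
    exact (LinearMap.congr_fun hg (p x)).symm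
  exact ⟨τ ∘ₗ g, hτ.of_comp_surjective hp hστ, hστ⟩

end Factor

end IsTracialState

/-- An extreme tracial state of a unital C*-subalgebra `B ⊆ A' ⊕ A''`
factors through one of the two coordinate projections. -/
theorem extreme_tracialState_dirSum {A' A'' : Type*}
    [NormedRing A'] [NormedAlgebra ℂ A'] [StarRing A'] [CStarRing A'] [CompleteSpace A']
    [StarModule ℂ A']
    [NormedRing A''] [NormedAlgebra ℂ A''] [StarRing A''] [CStarRing A''] [CompleteSpace A'']
    [StarModule ℂ A'']
    (B : StarSubalgebra ℂ (A' × A'')) (hB : IsClosed (B : Set (A' × A'')))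
    (τ : B →ₗ[ℂ] ℂ)
    (hτ : τ ∈ Set.extremePoints ℝ {σ : B →ₗ[ℂ] ℂ | IsTracialState σ}) :
    (∃ σ' : (B.map ({ AlgHom.fst ℂ A' A'' with map_star' := fun _ => rfl } :
          (A' × A'') →⋆ₐ[ℂ] A')) →ₗ[ℂ] ℂ,
        IsTracialState σ' ∧
          ∀ x : B, τ x = σ' ⟨(x : A' × A'').1, ⟨(x : A' × A''), x.2, rfl⟩⟩) ∨
    (∃ σ'' : (B.map ({ AlgHom.snd ℂ A' A'' with map_star' := fun _ => rfl } :
          (A' × A'') →⋆ₐ[ℂ] A'')) →ₗ[ℂ] ℂ,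
        IsTracialState σ'' ∧
          ∀ x : B, τ x = σ'' ⟨(x : A' × A'').2, ⟨(x : A' × A''), x.2, rfl⟩⟩) := by
  let : CStarAlgebra A' := {}
  let : CStarAlgebra A'' := {}
  have : IsClosed (B : Set (A' × A'')) := hB
  let : PartialOrder B := CStarAlgebra.spectralOrder B
  have : StarOrderedRing B := CStarAlgebra.spectralOrderedRing B
  let π'' : B →⋆ₐ[ℂ] A'' := (StarAlgHom.snd ℂ A' A'').comp B.subtype
  let J : NonUnitalStarSubalgebra ℂ B := .comap π'' ⊥
  have : IsClosed (J : Set B) := by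
    rw [NonUnitalStarSubalgebra.coe_comap, NonUnitalStarAlgebra.coe_bot]
    exact isClosed_singleton.preimage (continuous_snd.comp continuous_subtype_val)
  have hJ : ∀ x ∈ J, ∀ y, x * y ∈ J := by
    simp_all [J, π'', NonUnitalStarAlgebra.mem_bot]
  rcases IsTracialState.eq_zero_on_ideal_or_annihilator hτ J hJ with h | h
  · exact .inr <| hτ.1.exists_factor_through_map _ fun x hx =>
      h x (NonUnitalStarAlgebra.mem_bot.2 hx)
  · refine .inl (hτ.1.exists_factor_through_map _ fun x hx => h x fun e he => ?_)
    have he : (e : A' × A'').2 = 0 := NonUnitalStarAlgebra.mem_bot.1 he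
    have hx : (x : A' × A'').1 = 0 := hx
    exact Subtype.ext (Prod.ext (by simp [hx]) (by simp [he]))
end
end
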